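/- arXiv:2010.13966 — 6 statements merged into one kernel-verified Lean document; each statement's English description precedes it below -/
import Mathlib

section
/- Lichnerowicz estimate for the graph Laplacian: if a connected finite weighted graph (G,m,w) satisfies the Bakry-Émery curvature-dimension condition CD(K,n) with K>0 and n>1, then the first nonzero eigenvalue μ₂ of -Δ satisfies μ₂ ≥ nK/(n-1). -/
open Finset

variable {V : Type*} [Fintype V] [DecidableEq V]

/-- The weighted graph Laplacian: `Δu(x) = (1/m x) ∑_y (u y - u x) w x y`. -/
noncomputable def glap (m : V → ℝ) (w : V → V → ℝ) (u : V → ℝ) (x : V) : ℝ :=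
  (1 / m x) * ∑ y, (u y - u x) * w x y

/-- The carré du champ operator `Γ(u,v) = (1/2)(Δ(uv) - vΔu - uΔv)`. -/
noncomputable def gGam (m : V → ℝ) (w : V → V → ℝ) (u v : V → ℝ) (x : V) : ℝ :=
  (1 / 2) * (glap m w (fun z => u z * v z) x - v x * glap m w u x - u x * glap m w v x)

/-- The iterated carré du champ `Γ₂(u,v) = (1/2)(ΔΓ(u,v) - Γ(Δu,v) - Γ(u,Δv))`. -/
noncomputable def gGam2 (m : V → ℝ) (w : V → V → ℝ) (u v : V → ℝ) (x : V) : ℝ :=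
  (1 / 2) * (glap m w (gGam m w u v) x - gGam m w (glap m w u) v x - gGam m w u (glap m w v) x)

/-- Vertex inner product `⟨u,v⟩ = ∑_x u x v x m x`. -/
noncomputable def vip (m : V → ℝ) (u v : V → ℝ) : ℝ := ∑ x, u x * v x * m x

/-- Edge (1-form) inner product of differentials:
`⟨du,dv⟩ = ∑_{{x,y}∈E} (u y - u x)(v y - v x) w x y = (1/2)∑_{x,y}`. -/
noncomputable def eip (w : V → V → ℝ) (u v : V → ℝ) : ℝ :=
  (1 / 2) * ∑ x, ∑ y, (u y - u x) * (v y - v x) * w x y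

/-- `(m,w)` is a weighted graph structure: positive vertex measure, symmetric
nonnegative edge weights, no loops. -/
def WeightedGraph (m : V → ℝ) (w : V → V → ℝ) : Prop :=
  (∀ x, 0 < m x) ∧ (∀ x y, w x y = w y x) ∧ (∀ x y, 0 ≤ w x y) ∧ (∀ x, w x x = 0)

/-- The underlying simple graph: `x ∼ y` iff `w x y > 0`. -/
def wgraph (w : V → V → ℝ) : SimpleGraph V := SimpleGraph.fromRel (fun x y => 0 < w x y)

/-- The Bakry-Émery curvature-dimension condition `CD(K,n)`. -/
def CD (m : V → ℝ) (w : V → V → ℝ) (K n : ℝ) : Prop :=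
  ∀ (f : V → ℝ) (x : V), gGam2 m w f f x ≥ (1 / n) * (glap m w f x) ^ 2 + K * gGam m w f f x

/-- `B` is a vertex boundary: nonempty, independent, and every boundary vertex is
adjacent to some interior vertex. -/
def GraphBoundary (w : V → V → ℝ) (B : Finset V) : Prop :=
  B.Nonempty ∧ (∀ x ∈ B, ∀ y ∈ B, w x y = 0) ∧ (∀ x ∈ B, ∃ y, y ∉ B ∧ 0 < w x y)

/-- `σ` is a Steklov eigenvalue: there is `u`, harmonic on the interior, with
boundary restriction nonzero, and `∂u/∂n = σ u` on `B`. -/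
def SteklovEig (m : V → ℝ) (w : V → V → ℝ) (B : Finset V) (σ : ℝ) : Prop :=
  ∃ u : V → ℝ, (∃ x ∈ B, u x ≠ 0) ∧ (∀ x, x ∉ B → glap m w u x = 0) ∧
    (∀ x ∈ B, - glap m w u x = σ * u x)

/-- `μ` is an eigenvalue of `-Δ`. -/
def LapEig (m : V → ℝ) (w : V → V → ℝ) (μ : ℝ) : Prop :=
  ∃ u : V → ℝ, u ≠ 0 ∧ ∀ x, - glap m w u x = μ * u x

/-- The edge weight of the induced graph on the interior `Ω = Bᶜ`. -/
def wRes (B : Finset V) (w : V → V → ℝ) : V → V → ℝ :=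
  fun x y => if x ∈ B ∨ y ∈ B then 0 else w x y

/-!
If `-Δu = μu` with `u ≠ 0`, summing the pointwise identities `Γ(u,u) = ½Δ(u²) + μu²` and
`Γ₂(u,u) = ½ΔΓ(u,u) + μΓ(u,u)` against `m` kills the Laplacian terms (`∑ Δf m = 0` by symmetry
of `w`), so `∑ Γ(u,u) m = μN` and `∑ Γ₂(u,u) m = μ²N` with `N = ∑ u² m > 0`.
Since `Γ(u,u) ≥ 0`, a nonzero `μ` is positive, and integrating `CD(K,n)` gives
`μ²N/n + KμN ≤ μ²N`, i.e. `μ ≥ nK/(n-1)`.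
-/

section WeightedLaplacian

omit [DecidableEq V]

variable {m : V → ℝ} {w : V → V → ℝ}

lemma glap_mul_measure (hm : ∀ x, m x ≠ 0) (f : V → ℝ) (x : V) :
    glap m w f x * m x = ∑ y, (f y - f x) * w x y := by
  rw [glap, one_div, mul_comm, ← mul_assoc, mul_inv_cancel₀ (hm x), one_mul]

lemma sum_glap_mul_measure (hm : ∀ x, m x ≠ 0) (hs : ∀ x y, w x y = w y x) (f : V → ℝ) :
    ∑ x, glap m w f x * m x = 0 := by
  simp_rw [glap_mul_measure hm]
  have hanti : ∑ x, ∑ y, (f y - f x) * w x y = -∑ x, ∑ y, (f y - f x) * w x y := calc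
    _ = ∑ y, ∑ x, (f y - f x) * w x y := Finset.sum_comm
    _ = ∑ y, ∑ x, -((f x - f y) * w y x) :=
      Finset.sum_congr rfl fun y _ => Finset.sum_congr rfl fun x _ => by rw [hs x y]; ring
    _ = _ := by simp only [Finset.sum_neg_distrib]
  linarith

lemma glap_const_mul (c : ℝ) (u : V → ℝ) (x : V) :
    glap m w (fun z => c * u z) x = c * glap m w u x := by
  simp only [glap, ← mul_sub, mul_assoc, ← Finset.mul_sum]
  ring

lemma gGam_comm (u v : V → ℝ) (x : V) : gGam m w u v x = gGam m w v u x := by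
  simp only [gGam, mul_comm (u _) (v _)]
  ring

lemma gGam_const_mul_left (c : ℝ) (u v : V → ℝ) (x : V) :
    gGam m w (fun z => c * u z) v x = c * gGam m w u v x := by
  simp only [gGam, mul_assoc, glap_const_mul]
  ring

lemma gGam_self_mul_measure (hm : ∀ x, m x ≠ 0) (u : V → ℝ) (x : V) :
    gGam m w u u x * m x = (1 / 2) * ∑ y, (u y - u x) ^ 2 * w x y := by
  have hsplit : ∑ y, (u y - u x) ^ 2 * w x y
      = ∑ y, (u y * u y - u x * u x) * w x y - 2 * u x * ∑ y, (u y - u x) * w x y := by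
    rw [Finset.mul_sum, ← Finset.sum_sub_distrib]
    exact Finset.sum_congr rfl fun y _ => by ring
  rw [hsplit, ← glap_mul_measure hm, ← glap_mul_measure hm, gGam]
  ring

lemma gGam_self_nonneg (hm : ∀ x, 0 < m x) (hw : ∀ x y, 0 ≤ w x y) (u : V → ℝ) (x : V) :
    0 ≤ gGam m w u u x := by
  have h := gGam_self_mul_measure (w := w) (fun x => (hm x).ne') u x
  have hsum : 0 ≤ ∑ y, (u y - u x) ^ 2 * w x y :=
    Finset.sum_nonneg fun y _ => mul_nonneg (sq_nonneg _) (hw x y)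
  exact (mul_nonneg_iff_of_pos_right (hm x)).mp (h ▸ mul_nonneg one_half_pos.le hsum)

lemma sum_mul_measure_le_of_CD {K n : ℝ} (hm : ∀ x, 0 ≤ m x) (hCD : CD m w K n)
    (f : V → ℝ) :
    ∑ x, ((1 / n) * glap m w f x ^ 2 + K * gGam m w f f x) * m x
      ≤ ∑ x, gGam2 m w f f x * m x :=
  Finset.sum_le_sum fun x _ => mul_le_mul_of_nonneg_right (hCD f x) (hm x)

section Eigenfunction

variable {μ : ℝ} {u : V → ℝ}

lemma sum_gGam_self_mul_measure_of_eigen (hm : ∀ x, m x ≠ 0) (hs : ∀ x y, w x y = w y x)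
    (hu : ∀ x, -glap m w u x = μ * u x) :
    ∑ x, gGam m w u u x * m x = μ * ∑ x, u x ^ 2 * m x := by
  have hpt : ∀ x, gGam m w u u x * m x
      = (1 / 2) * (glap m w (fun z => u z * u z) x * m x) + μ * (u x ^ 2 * m x) := by
    intro x
    rw [gGam]
    linear_combination (u x * m x) * hu x
  simp only [hpt, Finset.sum_add_distrib, ← Finset.mul_sum, sum_glap_mul_measure hm hs]
  ring

lemma gGam2_self_of_eigen (hu : ∀ x, -glap m w u x = μ * u x) (x : V) :
    gGam2 m w u u x = (1 / 2) * glap m w (gGam m w u u) x + μ * gGam m w u u x := by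
  have hΔu : glap m w u = fun z => -μ * u z := funext fun z => by linarith [hu z]
  rw [gGam2, hΔu, gGam_const_mul_left, gGam_comm u (fun z => -μ * u z), gGam_const_mul_left]
  ring

lemma sum_gGam2_self_mul_measure_of_eigen (hm : ∀ x, m x ≠ 0) (hs : ∀ x y, w x y = w y x)
    (hu : ∀ x, -glap m w u x = μ * u x) :
    ∑ x, gGam2 m w u u x * m x = μ ^ 2 * ∑ x, u x ^ 2 * m x := by
  have hpt : ∀ x, gGam2 m w u u x * m x
      = (1 / 2) * (glap m w (gGam m w u u) x * m x) + μ * (gGam m w u u x * m x) := by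
    intro x
    rw [gGam2_self_of_eigen hu]
    ring
  simp only [hpt, Finset.sum_add_distrib, ← Finset.mul_sum, sum_glap_mul_measure hm hs,
    sum_gGam_self_mul_measure_of_eigen hm hs hu]
  ring

lemma sum_glap_sq_mul_measure_of_eigen (hu : ∀ x, -glap m w u x = μ * u x) :
    ∑ x, glap m w u x ^ 2 * m x = μ ^ 2 * ∑ x, u x ^ 2 * m x := by
  rw [Finset.mul_sum]
  refine Finset.sum_congr rfl fun x _ => ?_
  linear_combination -(glap m w u x - μ * u x) * m x * hu x

lemma sum_sq_mul_measure_pos (hm : ∀ x, 0 < m x) (hu : u ≠ 0) : 0 < ∑ x, u x ^ 2 * m x := by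
  obtain ⟨x₀, hx₀⟩ := Function.ne_iff.mp hu
  exact Finset.sum_pos' (fun x _ => mul_nonneg (sq_nonneg _) (hm x).le)
    ⟨x₀, Finset.mem_univ _, mul_pos (sq_pos_of_ne_zero hx₀) (hm x₀)⟩

end Eigenfunction

end WeightedLaplacian

lemma lichnerowicz_of_integrated {μ N K n : ℝ} (hn : 1 < n) (hμ : 0 < μ) (hN : 0 < N)
    (h : (1 / n) * (μ ^ 2 * N) + K * (μ * N) ≤ μ ^ 2 * N) : n * K / (n - 1) ≤ μ := by
  have hμN : 0 < μ * N := mul_pos hμ hN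
  have hK : K ≤ μ * (1 - 1 / n) := by nlinarith
  rw [div_le_iff₀ (by linarith)]
  have : μ * (1 - 1 / n) * n = μ * (n - 1) := by field_simp
  nlinarith

theorem stmt3_general (m : V → ℝ) (w : V → V → ℝ) (hW : WeightedGraph m w)
    (K n : ℝ) (hn : 1 < n)
    (hCD : CD m w K n) :
    ∀ μ : ℝ, LapEig m w μ → μ ≠ 0 → μ ≥ n * K / (n - 1) := by
  rintro μ ⟨u, hu0, hu⟩ hμ0
  obtain ⟨hm, hs, hw, -⟩ := hW
  have hm0 : ∀ x, m x ≠ 0 := fun x => (hm x).ne'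
  have hN := sum_sq_mul_measure_pos hm hu0
  have hE := sum_gGam_self_mul_measure_of_eigen hm0 hs hu
  have hμ : 0 < μ := by
    have : 0 ≤ μ * ∑ x, u x ^ 2 * m x :=
      hE ▸ Finset.sum_nonneg fun x _ => mul_nonneg (gGam_self_nonneg hm hw u x) (hm x).le
    exact lt_of_le_of_ne (nonneg_of_mul_nonneg_left this hN) (Ne.symm hμ0)
  have hint := sum_mul_measure_le_of_CD (fun x => (hm x).le) hCD u
  simp only [add_mul, Finset.sum_add_distrib, mul_assoc, ← Finset.mul_sum] at hint
  rw [sum_glap_sq_mul_measure_of_eigen hu, hE, sum_gGam2_self_mul_measure_of_eigen hm0 hs hu] at hint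
  exact lichnerowicz_of_integrated hn hμ hN hint

/-- Lichnerowicz estimate for the graph Laplacian: every nonzero
eigenvalue of `-Δ` is at least `nK/(n-1)`; i.e. `μ₂ ≥ nK/(n-1)`. -/
theorem stmt3 (m : V → ℝ) (w : V → V → ℝ) (hW : WeightedGraph m w)
    (hconn : (wgraph w).Connected) (K n : ℝ) (hK : 0 < K) (hn : 1 < n)
    (hCD : CD m w K n) :
    ∀ μ : ℝ, LapEig m w μ → μ ≠ 0 → μ ≥ n * K / (n - 1) :=
  stmt3_general m w hW K n hn hCD
end

section
/- Lichnerowicz-type estimate for Steklov eigenvalues: if a connected finite weighted graph with boundary (G,m,w,B) satisfies the Bakry-Émery curvature-dimension condition CD(K,n) with K>0 and n>1, then the first nonzero Steklov eigenvalue satisfies σ₂ ≥ nK/(n-1). -/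
open Finset

variable {V : Type*} [Fintype V] [DecidableEq V]

section Aux

variable (m : V → ℝ) (w : V → V → ℝ)

lemma lapmul (hm : ∀ x, 0 < m x) (g : V → ℝ) (x : V) :
    m x * glap m w g x = ∑ y, (g y - g x) * w x y := by
  unfold glap
  rw [← mul_assoc, mul_one_div, div_self (hm x).ne', one_mul]

lemma swapkey (hsym : ∀ x y, w x y = w y x) (a b : V → ℝ) :
    ∑ x, ∑ y, a x * b y * w x y = ∑ x, ∑ y, b x * a y * w x y := by
  rw [Finset.sum_comm]
  exact Finset.sum_congr rfl fun x _ => Finset.sum_congr rfl fun y _ => by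
    rw [hsym]; ring

lemma sum_lap (hm : ∀ x, 0 < m x) (hsym : ∀ x y, w x y = w y x) (g : V → ℝ) :
    ∑ x, m x * glap m w g x = 0 := by
  have e : ∀ x, m x * glap m w g x = ∑ y, (g y - g x) * w x y :=
    lapmul m w hm g
  simp only [e]
  have hA : ∑ x, ∑ y, g y * w x y = ∑ x, ∑ y, g x * w x y := by
    rw [Finset.sum_comm]
    exact Finset.sum_congr rfl fun x _ => Finset.sum_congr rfl fun y _ => by rw [hsym]
  simp only [sub_mul, Finset.sum_sub_distrib]
  rw [hA, sub_self]

lemma sym_pair (hm : ∀ x, 0 < m x) (hsym : ∀ x y, w x y = w y x) (u v : V → ℝ) :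
    ∑ x, m x * (v x * glap m w u x) = ∑ x, m x * (u x * glap m w v x) := by
  have e : ∀ (a b : V → ℝ) (x : V),
      m x * (a x * glap m w b x) = ∑ y, (a x * b y * w x y - a x * b x * w x y) := by
    intro a b x
    have h := lapmul m w hm b x
    calc m x * (a x * glap m w b x) = a x * (m x * glap m w b x) := by ring
      _ = a x * ∑ y, (b y - b x) * w x y := by rw [h]
      _ = ∑ y, (a x * b y * w x y - a x * b x * w x y) := by
          rw [Finset.mul_sum]; exact Finset.sum_congr rfl fun y _ => by ring
  simp only [e, Finset.sum_sub_distrib]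
  rw [swapkey w hsym v u]
  have e2 : ∀ x, ∑ y, v x * u x * w x y = ∑ y, u x * v x * w x y := by
    intro x; exact Finset.sum_congr rfl fun y _ => by ring
  simp only [e2]

lemma sum_gam (hm : ∀ x, 0 < m x) (hsym : ∀ x y, w x y = w y x) (u v : V → ℝ) :
    ∑ x, m x * gGam m w u v x = - ∑ x, m x * (u x * glap m w v x) := by
  have e : ∀ x, m x * gGam m w u v x =
      (1/2) * (m x * glap m w (fun z => u z * v z) x)
      - (1/2) * (m x * (v x * glap m w u x)) - (1/2) * (m x * (u x * glap m w v x)) := by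
    intro x; unfold gGam; ring
  simp only [e, Finset.sum_sub_distrib, ← Finset.mul_sum]
  rw [sum_lap m w hm hsym, sym_pair m w hm hsym u v]
  ring

lemma sum_gam' (hm : ∀ x, 0 < m x) (hsym : ∀ x y, w x y = w y x) (u v : V → ℝ) :
    ∑ x, m x * gGam m w u v x = - ∑ x, m x * (v x * glap m w u x) := by
  rw [sum_gam m w hm hsym u v, sym_pair m w hm hsym u v]

lemma sum_gam2 (hm : ∀ x, 0 < m x) (hsym : ∀ x y, w x y = w y x) (f : V → ℝ) :
    ∑ x, m x * gGam2 m w f f x = ∑ x, m x * (glap m w f x) ^ 2 := by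
  have e : ∀ x, m x * gGam2 m w f f x =
      (1/2) * (m x * glap m w (gGam m w f f) x)
      - (1/2) * (m x * gGam m w (glap m w f) f x)
      - (1/2) * (m x * gGam m w f (glap m w f) x) := by
    intro x; unfold gGam2; ring
  simp only [e, Finset.sum_sub_distrib, ← Finset.mul_sum]
  rw [sum_lap m w hm hsym, sum_gam m w hm hsym (glap m w f) f,
    sum_gam' m w hm hsym f (glap m w f)]
  have e2 : ∀ x, m x * (glap m w f x * glap m w f x) = m x * (glap m w f x) ^ 2 := by
    intro x; ring
  simp only [e2]
  ring

lemma gam_nonneg (hm : ∀ x, 0 < m x) (hwn : ∀ x y, 0 ≤ w x y) (u : V → ℝ) (x : V) :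
    0 ≤ gGam m w u u x := by
  have h1 : 2 * m x * gGam m w u u x = ∑ y, (u y - u x) ^ 2 * w x y := by
    have e : 2 * m x * gGam m w u u x =
        m x * glap m w (fun z => u z * u z) x - 2 * u x * (m x * glap m w u x) := by
      unfold gGam; ring
    rw [e, lapmul m w hm (fun z => u z * u z) x, lapmul m w hm u x,
      Finset.mul_sum, ← Finset.sum_sub_distrib]
    exact Finset.sum_congr rfl fun y _ => by ring
  have h2 : 0 ≤ ∑ y, (u y - u x) ^ 2 * w x y :=
    Finset.sum_nonneg fun y _ => mul_nonneg (sq_nonneg _) (hwn x y)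
  by_contra h
  push_neg at h
  nlinarith [hm x]

end Aux

/-- Lichnerowicz-type estimate for Steklov eigenvalues:
every nonzero Steklov eigenvalue is at least `nK/(n-1)`, i.e. `σ₂ ≥ nK/(n-1)`. -/
theorem stmt4 (m : V → ℝ) (w : V → V → ℝ) (B : Finset V) (hW : WeightedGraph m w)
    (hconn : (wgraph w).Connected) (hB : GraphBoundary w B)
    (K n : ℝ) (hK : 0 < K) (hn : 1 < n) (hCD : CD m w K n) :
    ∀ σ : ℝ, SteklovEig m w B σ → σ ≠ 0 → σ ≥ n * K / (n - 1) := by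
  obtain ⟨hm, hsym, hwn, -⟩ := hW
  rintro σ ⟨u, ⟨x0, hx0B, hx0⟩, hharm, heig⟩ hσ
  set S : ℝ := ∑ x ∈ B, m x * u x ^ 2 with hSdef
  have hS : 0 < S := by
    apply Finset.sum_pos' (fun x _ => mul_nonneg (hm x).le (sq_nonneg _))
    refine ⟨x0, hx0B, mul_pos (hm x0) ?_⟩
    positivity
  have hglapB : ∀ x ∈ B, glap m w u x = -(σ * u x) := by
    intro x hx; have := heig x hx; linarith
  -- Fact A
  have ha : ∑ x, m x * (glap m w u x) ^ 2 = σ ^ 2 * S := by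
    rw [← Finset.sum_add_sum_compl B]
    have h2 : ∑ x ∈ Bᶜ, m x * (glap m w u x) ^ 2 = 0 :=
      Finset.sum_eq_zero fun x hx => by
        rw [hharm x (Finset.mem_compl.mp hx)]; ring
    have h1 : ∑ x ∈ B, m x * (glap m w u x) ^ 2 = σ ^ 2 * S := by
      rw [hSdef, Finset.mul_sum]
      exact Finset.sum_congr rfl fun x hx => by rw [hglapB x hx]; ring
    rw [h1, h2, add_zero]
  -- Fact B
  have hb : ∑ x, m x * gGam m w u u x = σ * S := by
    rw [sum_gam m w hm hsym u u]
    have : ∑ x, m x * (u x * glap m w u x) = -(σ * S) := by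
      rw [← Finset.sum_add_sum_compl B]
      have h2 : ∑ x ∈ Bᶜ, m x * (u x * glap m w u x) = 0 :=
        Finset.sum_eq_zero fun x hx => by
          rw [hharm x (Finset.mem_compl.mp hx)]; ring
      have h1 : ∑ x ∈ B, m x * (u x * glap m w u x) = -(σ * S) := by
        rw [hSdef, Finset.mul_sum, ← Finset.sum_neg_distrib]
        exact Finset.sum_congr rfl fun x hx => by rw [hglapB x hx]; ring
      rw [h1, h2, add_zero]
    rw [this]; ring
  -- Fact C: summed CD inequality
  have hc : ∑ x, m x * gGam2 m w u u x ≥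
      ∑ x, m x * ((1 / n) * (glap m w u x) ^ 2 + K * gGam m w u u x) :=
    Finset.sum_le_sum fun x _ => mul_le_mul_of_nonneg_left (hCD u x) (hm x).le
  have e : ∀ x, m x * ((1 / n) * (glap m w u x) ^ 2 + K * gGam m w u u x)
      = (1 / n) * (m x * (glap m w u x) ^ 2) + K * (m x * gGam m w u u x) := by
    intro x; ring
  rw [sum_gam2 m w hm hsym u] at hc
  simp only [e, Finset.sum_add_distrib, ← Finset.mul_sum] at hc
  rw [ha, hb] at hc
  -- σ > 0
  have hσnn : 0 ≤ σ := by
    have h0 : 0 ≤ ∑ x, m x * gGam m w u u x :=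
      Finset.sum_nonneg fun x _ =>
        mul_nonneg (hm x).le (gam_nonneg m w hm hwn u x)
    rw [hb] at h0
    by_contra h
    push_neg at h
    nlinarith
  have hσpos : 0 < σ := lt_of_le_of_ne hσnn (Ne.symm hσ)
  -- conclude
  have hn0 : (0 : ℝ) < n := by linarith
  have hσS : 0 < σ * S := mul_pos hσpos hS
  have hkey : K ≤ σ * (1 - 1 / n) := by
    have h1 : K * (σ * S) ≤ (σ * (1 - 1 / n)) * (σ * S) := by nlinarith
    exact le_of_mul_le_mul_right h1 hσS
  rw [ge_iff_le, div_le_iff₀ (by linarith : (0:ℝ) < n - 1)]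
  have h2 : K * n ≤ σ * (1 - 1 / n) * n :=
    mul_le_mul_of_nonneg_right hkey hn0.le
  have h3 : σ * (1 - 1 / n) * n = σ * (n - 1) := by
    field_simp
  nlinarith
end

section
/- Rigidity of the Steklov Lichnerowicz estimate implies Laplacian rigidity: if (G,m,w,B) satisfies CD(K,n) with K>0, n>1 and σ₂ = nK/(n-1), then μ₂(G) = nK/(n-1), the harmonic extension u of a σ₂-eigenfunction is also an eigenfunction of -Δ for μ₂, and u vanishes on all interior vertices. -/
open Finset

variable {V : Type*} [Fintype V] [DecidableEq V]

section Aux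
set_option linter.unusedSectionVars false
variable {m : V → ℝ} {w : V → V → ℝ}

lemma eip_comm (w : V → V → ℝ) (f g : V → ℝ) : eip w f g = eip w g f := by
  unfold eip
  congr 1
  exact Finset.sum_congr rfl fun x _ => Finset.sum_congr rfl fun y _ => by ring

lemma glap_mul_m (hm : ∀ x, 0 < m x) (f : V → ℝ) (x : V) :
    glap m w f x * m x = ∑ y, (f y - f x) * w x y := by
  unfold glap
  field_simp [(hm x).ne']

lemma sum_glap (hm : ∀ x, 0 < m x)
    (hw : ∀ x y, w x y = w y x) (f g : V → ℝ) :
    ∑ x, glap m w f x * g x * m x = -eip w f g := by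
  have key : ∀ x ∈ Finset.univ (α := V), glap m w f x * g x * m x
      = ∑ y, (f y - f x) * g x * w x y := by
    intro x _
    calc glap m w f x * g x * m x = (glap m w f x * m x) * g x := by ring
    _ = (∑ y, (f y - f x) * w x y) * g x := by rw [glap_mul_m hm]
    _ = ∑ y, (f y - f x) * g x * w x y := by
        rw [Finset.sum_mul]; exact Finset.sum_congr rfl fun y _ => by ring
  rw [Finset.sum_congr rfl key]
  have hT : (∑ x, ∑ y, (f y - f x) * g y * w x y)
      = -∑ x, ∑ y, (f y - f x) * g x * w x y := by
    rw [Finset.sum_comm]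
    rw [← Finset.sum_neg_distrib]
    refine Finset.sum_congr rfl fun y _ => ?_
    rw [← Finset.sum_neg_distrib]
    refine Finset.sum_congr rfl fun x _ => ?_
    rw [hw x y]; ring
  unfold eip
  have expand : (∑ x, ∑ y, (f y - f x) * (g y - g x) * w x y)
      = (∑ x, ∑ y, (f y - f x) * g y * w x y)
        - ∑ x, ∑ y, (f y - f x) * g x * w x y := by
    rw [← Finset.sum_sub_distrib]
    refine Finset.sum_congr rfl fun x _ => ?_
    rw [← Finset.sum_sub_distrib]
    exact Finset.sum_congr rfl fun y _ => by ring
  rw [expand, hT]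
  ring

lemma sum_glap_m (hm : ∀ x, 0 < m x) (hw : ∀ x y, w x y = w y x) (f : V → ℝ) : ∑ x, glap m w f x * m x = 0 := by
  have h := sum_glap hm hw f (fun _ => 1)
  have he : eip w f (fun _ => 1) = 0 := by
    unfold eip
    have : ∀ x ∈ Finset.univ (α := V), (∑ y, (f y - f x) * ((1:ℝ) - 1) * w x y) = 0 := by
      intro x _; apply Finset.sum_eq_zero; intro y _; ring
    rw [Finset.sum_congr rfl this]; simp
  rw [he, neg_zero] at h
  rw [← h]
  exact Finset.sum_congr rfl fun x _ => by ring

lemma sum_adj (hm : ∀ x, 0 < m x) (hw : ∀ x y, w x y = w y x) (a b : V → ℝ) :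
    ∑ x, glap m w a x * b x * m x = ∑ x, a x * glap m w b x * m x := by
  have h1 := sum_glap hm hw a b
  have h2 := sum_glap hm hw b a
  rw [eip_comm w b a] at h2
  rw [h1, ← h2]
  exact Finset.sum_congr rfl fun x _ => by ring

lemma sum_gGam (hm : ∀ x, 0 < m x) (hw : ∀ x y, w x y = w y x) (a b : V → ℝ) : ∑ x, gGam m w a b x * m x = eip w a b := by
  have key : ∀ x ∈ Finset.univ (α := V), gGam m w a b x * m x
      = (1/2) * (glap m w (fun z => a z * b z) x * m x)
        - (1/2) * (glap m w a x * b x * m x) - (1/2) * (glap m w b x * a x * m x) := by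
    intro x _; unfold gGam; ring
  rw [Finset.sum_congr rfl key]
  rw [Finset.sum_sub_distrib, Finset.sum_sub_distrib, ← Finset.mul_sum, ← Finset.mul_sum,
    ← Finset.mul_sum, sum_glap_m hm hw, sum_glap hm hw a b, sum_glap hm hw b a,
    eip_comm w b a]
  ring

lemma sum_gGam2 (hm : ∀ x, 0 < m x) (hw : ∀ x y, w x y = w y x) (a b : V → ℝ) :
    ∑ x, gGam2 m w a b x * m x = ∑ x, glap m w a x * glap m w b x * m x := by
  have key : ∀ x ∈ Finset.univ (α := V), gGam2 m w a b x * m x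
      = (1/2) * (glap m w (gGam m w a b) x * m x)
        - (1/2) * (gGam m w (glap m w a) b x * m x)
        - (1/2) * (gGam m w a (glap m w b) x * m x) := by
    intro x _; unfold gGam2; ring
  rw [Finset.sum_congr rfl key]
  rw [Finset.sum_sub_distrib, Finset.sum_sub_distrib, ← Finset.mul_sum, ← Finset.mul_sum,
    ← Finset.mul_sum, sum_glap_m hm hw, sum_gGam hm hw, sum_gGam hm hw]
  have e1 : eip w (glap m w a) b = -∑ x, glap m w b x * glap m w a x * m x := by
    rw [sum_glap hm hw b (glap m w a), eip_comm]; ring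
  have e2 : eip w a (glap m w b) = -∑ x, glap m w a x * glap m w b x * m x := by
    rw [sum_glap hm hw a (glap m w b)]; ring
  rw [e1, e2]
  have : (∑ x, glap m w b x * glap m w a x * m x)
      = ∑ x, glap m w a x * glap m w b x * m x :=
    Finset.sum_congr rfl fun x _ => by ring
  rw [this]
  ring

noncomputable def Rq (m : V → ℝ) (w : V → V → ℝ) (K n : ℝ) (f g : V → ℝ) : ℝ :=
  (1 - 1/n) * (∑ x, glap m w f x * glap m w g x * m x) - K * eip w f g

lemma glap_lin (a b : V → ℝ) (t : ℝ) (x : V) :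
    glap m w (fun z => a z + t * b z) x = glap m w a x + t * glap m w b x := by
  unfold glap
  have : (∑ y, ((a y + t * b y) - (a x + t * b x)) * w x y)
      = (∑ y, (a y - a x) * w x y) + t * ∑ y, (b y - b x) * w x y := by
    rw [Finset.mul_sum, ← Finset.sum_add_distrib]
    exact Finset.sum_congr rfl fun y _ => by ring
  rw [this]; ring

lemma eip_lin (a b : V → ℝ) (t : ℝ) :
    eip w (fun z => a z + t * b z) (fun z => a z + t * b z)
      = eip w a a + 2 * t * eip w a b + t ^ 2 * eip w b b := by
  unfold eip
  have : ∀ x ∈ Finset.univ (α := V),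
      (∑ y, ((a y + t * b y) - (a x + t * b x)) * ((a y + t * b y) - (a x + t * b x)) * w x y)
      = (∑ y, (a y - a x) * (a y - a x) * w x y)
        + (2 * t) * (∑ y, (a y - a x) * (b y - b x) * w x y)
        + t ^ 2 * (∑ y, (b y - b x) * (b y - b x) * w x y) := by
    intro x _
    rw [Finset.mul_sum, Finset.mul_sum, ← Finset.sum_add_distrib, ← Finset.sum_add_distrib]
    exact Finset.sum_congr rfl fun y _ => by ring
  rw [Finset.sum_congr rfl this, Finset.sum_add_distrib, Finset.sum_add_distrib,
    ← Finset.mul_sum, ← Finset.mul_sum]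
  ring

lemma Rq_expand (K n : ℝ) (a b : V → ℝ) (t : ℝ) :
    Rq m w K n (fun z => a z + t * b z) (fun z => a z + t * b z)
      = Rq m w K n a a + 2 * t * Rq m w K n a b + t ^ 2 * Rq m w K n b b := by
  unfold Rq
  rw [eip_lin]
  have : ∀ x ∈ Finset.univ (α := V),
      glap m w (fun z => a z + t * b z) x * glap m w (fun z => a z + t * b z) x * m x
      = glap m w a x * glap m w a x * m x
        + (2 * t) * (glap m w a x * glap m w b x * m x)
        + t ^ 2 * (glap m w b x * glap m w b x * m x) := by
    intro x _
    rw [glap_lin]; ring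
  rw [Finset.sum_congr rfl this, Finset.sum_add_distrib, Finset.sum_add_distrib,
    ← Finset.mul_sum, ← Finset.mul_sum]
  ring

lemma Rq_nonneg (hm : ∀ x, 0 < m x) (hw : ∀ x y, w x y = w y x) {K n : ℝ}
    (hCD : CD m w K n) (f : V → ℝ) : 0 ≤ Rq m w K n f f := by
  have hpt : ∀ x ∈ Finset.univ (α := V),
      ((1 / n) * (glap m w f x) ^ 2 + K * gGam m w f f x) * m x ≤ gGam2 m w f f x * m x :=
    fun x _ => mul_le_mul_of_nonneg_right (hCD f x) (hm x).le
  have hsum := Finset.sum_le_sum hpt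
  rw [sum_gGam2 hm hw] at hsum
  have hsplit : (∑ x, ((1 / n) * (glap m w f x) ^ 2 + K * gGam m w f f x) * m x)
      = (1 / n) * (∑ x, glap m w f x * glap m w f x * m x) + K * (∑ x, gGam m w f f x * m x) := by
    rw [Finset.mul_sum, Finset.mul_sum, ← Finset.sum_add_distrib]
    exact Finset.sum_congr rfl fun x _ => by ring
  rw [hsplit, sum_gGam hm hw] at hsum
  unfold Rq
  linarith

lemma quad_zero {A B : ℝ} (hA : 0 ≤ A) (h : ∀ t : ℝ, 0 ≤ A * t ^ 2 + 2 * B * t) : B = 0 := by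
  have h1 := h (-(B / (A + 1)))
  have hA1 : (0:ℝ) < A + 1 := by linarith
  have key : 0 ≤ (A * (B / (A + 1)) ^ 2 - 2 * B * (B / (A + 1))) * (A + 1) ^ 2 := by
    have : 0 ≤ A * (B / (A + 1)) ^ 2 - 2 * B * (B / (A + 1)) := by nlinarith
    positivity
  have hfs : (A * (B / (A + 1)) ^ 2 - 2 * B * (B / (A + 1))) * (A + 1) ^ 2
      = A * B ^ 2 - 2 * B ^ 2 * (A + 1) := by
    field_simp
  rw [hfs] at key
  nlinarith [sq_nonneg B]

end Aux

/-- rigidity of the Steklov Lichnerowicz estimate implies Laplacian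
rigidity: if `σ₂ = nK/(n-1)` then `μ₂ = nK/(n-1)`, the harmonic extension `u`
of a `σ₂`-eigenfunction is a `μ₂`-eigenfunction of `-Δ`, and `u` vanishes on `Ω`. -/
theorem stmt7 (m : V → ℝ) (w : V → V → ℝ) (B : Finset V) (hW : WeightedGraph m w)
    (hconn : (wgraph w).Connected) (hB : GraphBoundary w B)
    (K n : ℝ) (hK : 0 < K) (hn : 1 < n) (hCD : CD m w K n)
    (hs1 : SteklovEig m w B (n * K / (n - 1)))
    (hs2 : ∀ σ : ℝ, SteklovEig m w B σ → 0 < σ → n * K / (n - 1) ≤ σ)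
    (u : V → ℝ) (hu1 : ∀ x, x ∉ B → glap m w u x = 0)
    (hu2 : ∀ x ∈ B, - glap m w u x = (n * K / (n - 1)) * u x)
    (hu3 : ∑ x ∈ B, u x * u x * m x = 1) :
    LapEig m w (n * K / (n - 1)) ∧
    (∀ μ : ℝ, LapEig m w μ → 0 < μ → n * K / (n - 1) ≤ μ) ∧
    (∀ x, - glap m w u x = (n * K / (n - 1)) * u x) ∧
    (∀ x, x ∉ B → u x = 0) := by
  obtain ⟨hm, hw, hw0, hwl⟩ := hW
  set σ := n * K / (n - 1) with hσdef
  have hn0 : (0:ℝ) < n := by linarith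
  have hn1 : (0:ℝ) < n - 1 := by linarith
  have hσ : 0 < σ := div_pos (mul_pos hn0 hK) hn1
  have hgB : ∀ x ∈ B, glap m w u x = -(σ * u x) := by
    intro x hx; have := hu2 x hx; linarith
  -- Step A : ∑ (Δu)² m = σ²
  have hDD : ∑ x, glap m w u x * glap m w u x * m x = σ ^ 2 := by
    have hsub : ∑ x ∈ B, glap m w u x * glap m w u x * m x
        = ∑ x, glap m w u x * glap m w u x * m x :=
      Finset.sum_subset (Finset.subset_univ B) (fun x _ hx => by rw [hu1 x hx]; ring)
    rw [← hsub]
    have hpt : ∀ x ∈ B, glap m w u x * glap m w u x * m x = σ ^ 2 * (u x * u x * m x) := by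
      intro x hx; rw [hgB x hx]; ring
    rw [Finset.sum_congr rfl hpt, ← Finset.mul_sum, hu3, mul_one]
  -- Step B : eip u u = σ
  have heip : eip w u u = σ := by
    have h := sum_glap hm hw u u
    have hL : ∑ x, glap m w u x * u x * m x = -σ := by
      have hsub : ∑ x ∈ B, glap m w u x * u x * m x = ∑ x, glap m w u x * u x * m x :=
        Finset.sum_subset (Finset.subset_univ B) (fun x _ hx => by rw [hu1 x hx]; ring)
      rw [← hsub]
      have hpt : ∀ x ∈ B, glap m w u x * u x * m x = -σ * (u x * u x * m x) := by
        intro x hx; rw [hgB x hx]; ring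
      rw [Finset.sum_congr rfl hpt, ← Finset.mul_sum, hu3, mul_one]
    rw [hL] at h; linarith
  -- Step C : Rq u u = 0
  have hRuu : Rq m w K n u u = 0 := by
    unfold Rq
    rw [hDD, heip, hσdef]
    field_simp
    ring
  -- Step D : Rq u g = 0 for every g
  have hRug : ∀ g : V → ℝ, Rq m w K n u g = 0 := by
    intro g
    refine quad_zero (Rq_nonneg hm hw hCD g) (fun t => ?_)
    have h := Rq_nonneg hm hw hCD (fun z => u z + t * g z)
    rw [Rq_expand, hRuu] at h
    linarith
  -- Step E : pointwise equation (1-1/n) ΔΔu + K Δu = 0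
  have hkey : ∀ x, (1 - 1/n) * glap m w (glap m w u) x + K * glap m w u x = 0 := by
    intro x0
    set g : V → ℝ := fun z => if z = x0 then 1 else 0 with hg
    have hRg := hRug g
    unfold Rq at hRg
    have e1 : ∑ x, glap m w u x * glap m w g x * m x
        = ∑ x, glap m w (glap m w u) x * g x * m x := (sum_adj hm hw (glap m w u) g).symm
    have e2 : eip w u g = -∑ x, glap m w u x * g x * m x := by
      have := sum_glap hm hw u g; linarith
    rw [e1, e2] at hRg
    have s1 : ∑ x, glap m w (glap m w u) x * g x * m x
        = glap m w (glap m w u) x0 * m x0 := by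
      have hpt : ∀ x ∈ Finset.univ (α := V), glap m w (glap m w u) x * g x * m x
          = if x = x0 then glap m w (glap m w u) x * m x else 0 := by
        intro x _; rw [hg]; by_cases h : x = x0 <;> simp [h]
      rw [Finset.sum_congr rfl hpt, Finset.sum_ite_eq']
      simp
    have s2 : ∑ x, glap m w u x * g x * m x = glap m w u x0 * m x0 := by
      have hpt : ∀ x ∈ Finset.univ (α := V), glap m w u x * g x * m x
          = if x = x0 then glap m w u x * m x else 0 := by
        intro x _; rw [hg]; by_cases h : x = x0 <;> simp [h]
      rw [Finset.sum_congr rfl hpt, Finset.sum_ite_eq']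
      simp
    rw [s1, s2] at hRg
    have hfac : ((1 - 1/n) * glap m w (glap m w u) x0 + K * glap m w u x0) * m x0 = 0 := by
      ring_nf
      ring_nf at hRg
      linarith
    rcases mul_eq_zero.mp hfac with h | h
    · exact h
    · exact absurd h (hm x0).ne'
  -- Step F : boundary flux vanishes at interior vertices
  have hP : ∀ x, x ∉ B → (∑ y, (if y ∈ B then u y * w x y else 0)) = 0 := by
    intro x hx
    have h1 : glap m w u x = 0 := hu1 x hx
    have h2 : glap m w (glap m w u) x = 0 := by
      have hk := hkey x
      rw [h1] at hk
      have hne : (1 - 1/n) ≠ 0 := by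
        have : 1/n < 1 := by rw [div_lt_one hn0]; linarith
        linarith
      have : (1 - 1/n) * glap m w (glap m w u) x = 0 := by linarith
      exact (mul_eq_zero.mp this).resolve_left hne
    have h3 : ∑ y, (glap m w u y - glap m w u x) * w x y = 0 := by
      rw [← glap_mul_m hm (glap m w u) x, h2, zero_mul]
    rw [h1] at h3
    have h4 : ∀ y ∈ Finset.univ (α := V), (glap m w u y - 0) * w x y
        = -σ * (if y ∈ B then u y * w x y else 0) := by
      intro y _
      by_cases hy : y ∈ B
      · rw [hgB y hy, if_pos hy]; ring
      · rw [hu1 y hy, if_neg hy]; ring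
    rw [Finset.sum_congr rfl h4, ← Finset.mul_sum] at h3
    rcases mul_eq_zero.mp h3 with h | h
    · exact absurd h (by simp; exact hσ.ne')
    · exact h
  -- Step G : the restricted Laplacian identity
  have hwres : ∀ x y, wRes B w x y = wRes B w y x := by
    intro x y; unfold wRes
    by_cases h1 : x ∈ B <;> by_cases h2 : y ∈ B <;> simp [h1, h2, hw x y]
  have hwres0 : ∀ x y, 0 ≤ wRes B w x y := by
    intro x y; unfold wRes; split_ifs
    · exact le_refl 0
    · exact hw0 x y
  have hql : ∀ x, glap m (wRes B w) u x * m x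
      = if x ∈ B then 0 else u x * (∑ y, (if y ∈ B then w x y else 0)) := by
    intro x
    rw [glap_mul_m (w := wRes B w) hm]
    by_cases hx : x ∈ B
    · rw [if_pos hx]
      apply Finset.sum_eq_zero
      intro y _
      unfold wRes
      rw [if_pos (Or.inl hx), mul_zero]
    · rw [if_neg hx]
      have hsplit : (∑ y, (u y - u x) * w x y) = 0 := by
        rw [← glap_mul_m hm u x, hu1 x hx, zero_mul]
      have hdecomp : ∀ y ∈ Finset.univ (α := V), (u y - u x) * w x y
          = (if y ∈ B then (u y - u x) * w x y else 0)
            + (u y - u x) * wRes B w x y := by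
        intro y _
        unfold wRes
        by_cases hy : y ∈ B <;> simp [hy, hx]
      rw [Finset.sum_congr rfl hdecomp, Finset.sum_add_distrib] at hsplit
      have hB1 : (∑ y, (if y ∈ B then (u y - u x) * w x y else 0))
          = (∑ y, (if y ∈ B then u y * w x y else 0))
            - u x * (∑ y, (if y ∈ B then w x y else 0)) := by
        rw [Finset.mul_sum, ← Finset.sum_sub_distrib]
        refine Finset.sum_congr rfl fun y _ => ?_
        by_cases hy : y ∈ B <;> simp [hy] <;> ring
      rw [hB1, hP x hx] at hsplit
      linarith
  -- Step I : everything vanishes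
  have hsum := sum_glap hm hwres u u
  have hLrw : ∀ x ∈ Finset.univ (α := V), glap m (wRes B w) u x * u x * m x
      = if x ∈ B then 0 else u x * u x * (∑ y, (if y ∈ B then w x y else 0)) := by
    intro x _
    have : glap m (wRes B w) u x * u x * m x = (glap m (wRes B w) u x * m x) * u x := by ring
    rw [this, hql x]
    by_cases hx : x ∈ B <;> simp [hx] <;> ring
  rw [Finset.sum_congr rfl hLrw] at hsum
  have hDnn : ∀ x, 0 ≤ ∑ y, (if y ∈ B then w x y else 0) := by
    intro x
    apply Finset.sum_nonneg
    intro y _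
    split_ifs
    · exact hw0 x y
    · exact le_refl 0
  have hLnn : ∀ x ∈ Finset.univ (α := V),
      0 ≤ if x ∈ B then (0:ℝ) else u x * u x * (∑ y, (if y ∈ B then w x y else 0)) := by
    intro x _
    split_ifs
    · exact le_refl 0
    · exact mul_nonneg (mul_self_nonneg _) (hDnn x)
  have hEnn : 0 ≤ eip (wRes B w) u u := by
    unfold eip
    apply mul_nonneg (by norm_num)
    apply Finset.sum_nonneg
    intro x _
    apply Finset.sum_nonneg
    intro y _
    exact mul_nonneg (mul_self_nonneg _) (hwres0 x y)
  have hL0 : ∑ x, (if x ∈ B then (0:ℝ)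
      else u x * u x * (∑ y, (if y ∈ B then w x y else 0))) = 0 := by
    have h1 : (0:ℝ) ≤ ∑ x, (if x ∈ B then (0:ℝ)
        else u x * u x * (∑ y, (if y ∈ B then w x y else 0))) := Finset.sum_nonneg hLnn
    linarith
  have hE0 : eip (wRes B w) u u = 0 := by
    rw [hsum] at hL0; linarith
  -- consequences
  have hDzero : ∀ x, x ∉ B → u x ≠ 0 → ∀ y ∈ B, w x y = 0 := by
    intro x hx hux y hy
    have hterm := (Finset.sum_eq_zero_iff_of_nonneg hLnn).mp hL0 x (Finset.mem_univ x)
    rw [if_neg hx] at hterm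
    have hDx : (∑ y, (if y ∈ B then w x y else 0)) = 0 := by
      have huu : 0 < u x * u x := mul_self_pos.mpr hux
      rcases mul_eq_zero.mp hterm with h | h
      · exact absurd h huu.ne'
      · exact h
    have hnn : ∀ z ∈ Finset.univ (α := V), 0 ≤ if z ∈ B then w x z else 0 := by
      intro z _; split_ifs
      · exact hw0 x z
      · exact le_refl 0
    have := (Finset.sum_eq_zero_iff_of_nonneg hnn).mp hDx y (Finset.mem_univ y)
    rwa [if_pos hy] at this
  have hedge : ∀ x y, x ∉ B → y ∉ B → 0 < w x y → u y = u x := by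
    intro x y hx hy hwxy
    unfold eip at hE0
    have hS0 : ∑ x, ∑ y, (u y - u x) * (u y - u x) * wRes B w x y = 0 := by linarith
    have hinn : ∀ a ∈ Finset.univ (α := V),
        0 ≤ ∑ b, (u b - u a) * (u b - u a) * wRes B w a b := by
      intro a _
      exact Finset.sum_nonneg fun b _ => mul_nonneg (mul_self_nonneg _) (hwres0 a b)
    have hx0 := (Finset.sum_eq_zero_iff_of_nonneg hinn).mp hS0 x (Finset.mem_univ x)
    have hterm := (Finset.sum_eq_zero_iff_of_nonneg
      (fun b _ => mul_nonneg (mul_self_nonneg _) (hwres0 x b))).mp hx0 y (Finset.mem_univ y)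
    have hwr : wRes B w x y = w x y := by unfold wRes; simp [hx, hy]
    rw [hwr] at hterm
    have : (u y - u x) * (u y - u x) = 0 := by
      rcases mul_eq_zero.mp hterm with h | h
      · exact h
      · exact absurd h hwxy.ne'
    have := mul_self_eq_zero.mp this
    linarith [sub_eq_zero.mp this]
  -- Step J : u vanishes on the interior
  have hΩ : ∀ x, x ∉ B → u x = 0 := by
    intro x hx
    by_contra hux
    obtain ⟨b, hb⟩ := hB.1
    have claim : ∀ (a : V) (p : (wgraph w).Walk a b), a ∉ B → u a ≠ 0 → False := by
      intro a p
      induction p with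
      | nil => intro h _; exact h hb
      | @cons a c _ hadj q ih =>
        intro ha hua
        have hwac : 0 < w a c := by
          obtain ⟨hne, hr⟩ := (SimpleGraph.fromRel_adj _ _ _).mp hadj
          rcases hr with h | h
          · exact h
          · rw [hw a c]; exact h
        have hc : c ∉ B := by
          intro hcB
          rw [hDzero a ha hua c hcB] at hwac
          exact lt_irrefl 0 hwac
        have huc : u c = u a := hedge a c ha hc hwac
        exact ih hb hc (by rw [huc]; exact hua)
    obtain ⟨p⟩ := hconn x b
    exact claim x p hx hux
  -- conclusions
  have heig : ∀ x, - glap m w u x = σ * u x := by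
    intro x
    by_cases hx : x ∈ B
    · exact hu2 x hx
    · rw [hu1 x hx, hΩ x hx, neg_zero, mul_zero]
  have hune : u ≠ 0 := by
    intro h0
    rw [h0] at hu3
    simp at hu3
  refine ⟨⟨u, hune, heig⟩, ?_, heig, hΩ⟩
  -- Lichnerowicz for the Laplacian
  intro μ hμe hμ
  obtain ⟨f, hf0, hfe⟩ := hμe
  have hgf : ∀ x, glap m w f x = -(μ * f x) := fun x => by have := hfe x; linarith
  set N := ∑ x, f x * f x * m x with hN
  have hNpos : 0 < N := by
    obtain ⟨x, hx⟩ := Function.ne_iff.mp hf0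
    apply Finset.sum_pos' (fun z _ => mul_nonneg (mul_self_nonneg _) (hm z).le)
    exact ⟨x, Finset.mem_univ x, mul_pos (mul_self_pos.mpr hx) (hm x)⟩
  have hR := Rq_nonneg hm hw hCD f
  unfold Rq at hR
  have e1 : ∑ x, glap m w f x * glap m w f x * m x = μ ^ 2 * N := by
    rw [hN, Finset.mul_sum]
    refine Finset.sum_congr rfl fun x _ => ?_
    rw [hgf x]; ring
  have e2 : eip w f f = μ * N := by
    have h := sum_glap hm hw f f
    have hL : ∑ x, glap m w f x * f x * m x = -(μ * N) := by
      rw [hN, Finset.mul_sum, ← Finset.sum_neg_distrib]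
      refine Finset.sum_congr rfl fun x _ => ?_
      rw [hgf x]; ring
    rw [hL] at h; linarith
  rw [e1, e2] at hR
  rw [hσdef, div_le_iff₀ hn1]
  have hR2 : 0 ≤ (n - 1) * (μ ^ 2 * N) - n * (K * (μ * N)) := by
    have h := mul_nonneg hn0.le hR
    have : n * ((1 - 1/n) * (μ ^ 2 * N) - K * (μ * N))
        = (n - 1) * (μ ^ 2 * N) - n * (K * (μ * N)) := by
      field_simp
      try ring
    linarith [this ▸ h]
  nlinarith [mul_pos hμ hNpos]
end

section
/- Rigidity for unit weight: let (G,B) be a connected finite graph with boundary with unit weights (m ≡ 1, w ≡ 1 on edges) satisfying CD(K,n) with K>0, n>1, and suppose σ₂ = nK/(n-1). Then |V(G)| ∈ {3,4}. If |V(G)| = 3 then K = 1/2, n = 2, and (G,B) is the path on 3 vertices with the two endpoints as boundary. If |V(G)| = 4 then n = ∞, K = 2, and (G,B) is either the 4-cycle with two opposite vertices as boundary, or the 4-cycle plus one diagonal between the two interior vertices, with the other diagonal pair as boundary. -/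
open Finset

variable {V : Type*} [Fintype V] [DecidableEq V]

open ENNReal in
/-- The coefficient `1/n` for the extended dimension parameter `n ∈ (1,∞]`,
equal to `0` when `n = ∞`. -/
noncomputable def cdC (n : ℝ≥0∞) : ℝ := (n⁻¹).toReal

open ENNReal in
/-- The Lichnerowicz constant `nK/(n-1)`, equal to `K` when `n = ∞`. -/
noncomputable def lich (n : ℝ≥0∞) (K : ℝ) : ℝ :=
  if n = ⊤ then K else n.toReal * K / (n.toReal - 1)

open ENNReal in
/-- The Bakry-Émery condition `CD(K,n)` for extended dimension `n ∈ (1,∞]`;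
for `n = ∞` the `(Δf)²/n` term is omitted. -/
def CDE (m : V → ℝ) (w : V → V → ℝ) (K : ℝ) (n : ℝ≥0∞) : Prop :=
  ∀ (f : V → ℝ) (x : V),
    gGam2 m w f f x ≥ cdC n * (glap m w f x) ^ 2 + K * gGam m w f f x


set_option linter.unusedSectionVars false
set_option maxHeartbeats 1000000

section Aux
variable {V : Type*} [Fintype V] [DecidableEq V]
variable (G : SimpleGraph V) [DecidableRel G.Adj]

noncomputable def gw : V → V → ℝ := fun x y => if G.Adj x y then 1 else 0
noncomputable def gL (f : V → ℝ) (x : V) : ℝ := ∑ y, (f y - f x) * gw G x y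
noncomputable def gd (x : V) : ℝ := ∑ y, gw G x y
noncomputable def gG (f g : V → ℝ) (x : V) : ℝ :=
  (1/2) * ∑ y, (f y - f x) * (g y - g x) * gw G x y
noncomputable def gG2 (f g : V → ℝ) (x : V) : ℝ :=
  (1/2) * (gL G (gG G f g) x - gG G (gL G f) g x - gG G f (gL G g) x)

lemma glap_eq (f : V → ℝ) (x : V) :
    glap (fun _ => (1:ℝ)) (fun x y => if G.Adj x y then (1:ℝ) else 0) f x = gL G f x := by
  simp [glap, gL, gw]

lemma gGam_eq (f g : V → ℝ) (x : V) :
    gGam (fun _ => (1:ℝ)) (fun x y => if G.Adj x y then (1:ℝ) else 0) f g x = gG G f g x := by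
  unfold gGam
  rw [glap_eq, glap_eq, glap_eq]
  unfold gL gG
  rw [Finset.mul_sum, Finset.mul_sum, ← Finset.sum_sub_distrib, ← Finset.sum_sub_distrib]
  congr 1
  apply Finset.sum_congr rfl; intros; ring

lemma gGam2_eq (f g : V → ℝ) (x : V) :
    gGam2 (fun _ => (1:ℝ)) (fun x y => if G.Adj x y then (1:ℝ) else 0) f g x = gG2 G f g x := by
  unfold gGam2 gG2
  rw [glap_eq]
  have h1 : gGam (fun _ => (1:ℝ)) (fun x y => if G.Adj x y then (1:ℝ) else 0) f g = gG G f g :=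
    funext fun y => gGam_eq G f g y
  have h2 : glap (fun _ => (1:ℝ)) (fun x y => if G.Adj x y then (1:ℝ) else 0) f = gL G f :=
    funext fun y => glap_eq G f y
  have h3 : glap (fun _ => (1:ℝ)) (fun x y => if G.Adj x y then (1:ℝ) else 0) g = gL G g :=
    funext fun y => glap_eq G g y
  rw [h1, h2, h3, gGam_eq, gGam_eq]


lemma gw_symm (x y : V) : gw G x y = gw G y x := by simp [gw, G.adj_comm]
lemma gw_nonneg (x y : V) : 0 ≤ gw G x y := by unfold gw; positivity
lemma gw_self (x : V) : gw G x x = 0 := by simp [gw]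
lemma gG_comm (f g : V → ℝ) (x : V) : gG G f g x = gG G g f x := by
  unfold gG; congr 1; apply Finset.sum_congr rfl; intros; ring

lemma gL_lin (a b : V → ℝ) (t : ℝ) (x : V) :
    gL G (fun y => a y + t * b y) x = gL G a x + t * gL G b x := by
  unfold gL
  simp only [Finset.mul_sum]
  rw [← Finset.sum_add_distrib]
  exact Finset.sum_congr rfl fun y _ => by ring

lemma gL_comb (a b c' : V → ℝ) (s t : ℝ) (x : V) :
    gL G (fun y => a y + s * b y + t * c' y) x = gL G a x + s * gL G b x + t * gL G c' x := by
  unfold gL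
  simp only [Finset.mul_sum]
  rw [← Finset.sum_add_distrib, ← Finset.sum_add_distrib]
  exact Finset.sum_congr rfl fun y _ => by ring

lemma gG_lin_left (a b p : V → ℝ) (t : ℝ) (x : V) :
    gG G (fun y => a y + t * b y) p x = gG G a p x + t * gG G b p x := by
  unfold gG
  simp only [Finset.mul_sum]
  rw [← Finset.sum_add_distrib]
  exact Finset.sum_congr rfl fun y _ => by ring

lemma gG_lin_right (a b p : V → ℝ) (t : ℝ) (x : V) :
    gG G p (fun y => a y + t * b y) x = gG G p a x + t * gG G p b x := by
  rw [gG_comm, gG_lin_left, gG_comm G a p, gG_comm G b p]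

noncomputable def PB (c K : ℝ) (u g : V → ℝ) (x : V) : ℝ :=
  gG2 G u g x - c * (gL G u x * gL G g x) - K * gG G u g x

lemma PB_expand (c K : ℝ) (u g : V → ℝ) (t : ℝ) (x : V) :
    PB G c K (fun y => u y + t * g y) (fun y => u y + t * g y) x
      = PB G c K u u x + 2*t*(PB G c K u g x) + t^2 * PB G c K g g x := by
  have hF : gL G (fun y => u y + t * g y) = fun y => gL G u y + t * gL G g y :=
    funext fun y => gL_lin G u g t y
  have hGF : gG G (fun y => u y + t * g y) (fun y => u y + t * g y)
      = fun y => gG G u u y + (2*t) * gG G u g y + t^2 * gG G g g y := by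
    funext y
    rw [gG_lin_left, gG_lin_right, gG_lin_right, gG_comm G g u]
    ring
  unfold PB gG2
  simp only [hGF, hF]
  rw [gL_comb, gG_lin_left, gG_lin_right, gG_lin_right, gG_lin_right, gG_lin_left, gG_lin_left]
  rw [gG_comm G (gL G g) u, gG_comm G g (gL G u)]
  ring

lemma PB_vanish (c K : ℝ) (u : V → ℝ) (x : V)
    (hQ : ∀ f : V → ℝ, 0 ≤ PB G c K f f x) (hu : PB G c K u u x = 0) (g : V → ℝ) :
    PB G c K u g x = 0 := by
  set A := PB G c K g g x with hA'
  set Bv := PB G c K u g x with hB'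
  have hA : 0 ≤ A := hQ g
  by_contra hB
  have hBpos : 0 < Bv^2 := by positivity
  set t₀ : ℝ := -Bv/(A+1) with ht₀
  have h1 : 0 ≤ 2*t₀*Bv + t₀^2 * A := by
    have := hQ (fun y => u y + t₀ * g y)
    rw [PB_expand] at this
    rw [hu] at this
    linarith
  have hden : (A+1) > 0 := by linarith
  have key : t₀ * (A+1) = -Bv := by
    rw [ht₀]; field_simp
  nlinarith [h1, hA, hBpos, sq_nonneg (A+1), mul_pos hden hden]

lemma gw_swap_sum (F : V → V → ℝ) :
    ∑ x, ∑ y, F x y * gw G x y = ∑ x, ∑ y, F y x * gw G x y := by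
  rw [Finset.sum_comm]
  exact Finset.sum_congr rfl fun x _ => Finset.sum_congr rfl fun y _ => by rw [gw_symm]

lemma sum_gL (f : V → ℝ) : ∑ x, gL G f x = 0 := by
  unfold gL
  have h := gw_swap_sum G (fun x y => f y - f x)
  have h2 : ∑ x, ∑ y, (f x - f y) * gw G x y
      = - ∑ x, ∑ y, (f y - f x) * gw G x y := by
    rw [← Finset.sum_neg_distrib]
    refine Finset.sum_congr rfl fun x _ => ?_
    rw [← Finset.sum_neg_distrib]
    exact Finset.sum_congr rfl fun y _ => by ring
  linarith [h, h2]

lemma sum_gG_key (f g : V → ℝ) :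
    ∑ x, ∑ y, (f y + f x) * (g y - g x) * gw G x y = 0 := by
  have h := gw_swap_sum G (fun x y => (f y + f x) * (g y - g x))
  have h2 : ∑ x, ∑ y, (f x + f y) * (g x - g y) * gw G x y
      = - ∑ x, ∑ y, (f y + f x) * (g y - g x) * gw G x y := by
    rw [← Finset.sum_neg_distrib]
    refine Finset.sum_congr rfl fun x _ => ?_
    rw [← Finset.sum_neg_distrib]
    exact Finset.sum_congr rfl fun y _ => by ring
  linarith [h, h2]

lemma sum_gG (f g : V → ℝ) : ∑ x, gG G f g x = - ∑ x, f x * gL G g x := by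
  have key : ∑ x, gG G f g x + ∑ x, f x * gL G g x
      = (1/2) * ∑ x, ∑ y, (f y + f x) * (g y - g x) * gw G x y := by
    rw [← Finset.sum_add_distrib, Finset.mul_sum]
    refine Finset.sum_congr rfl fun x _ => ?_
    unfold gG gL
    simp only [Finset.mul_sum]
    rw [← Finset.sum_add_distrib]
    exact Finset.sum_congr rfl fun y _ => by ring
  rw [sum_gG_key] at key
  linarith [key]

lemma sum_gG2 (f : V → ℝ) : ∑ x, gG2 G f f x = ∑ x, gL G f x * gL G f x := by
  have hc : gG G f (gL G f) = gG G (gL G f) f := funext fun x => gG_comm G f (gL G f) x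
  unfold gG2
  simp only [hc]
  rw [← Finset.mul_sum, Finset.sum_sub_distrib, Finset.sum_sub_distrib, sum_gL, sum_gG]
  ring

noncomputable def dd (z : V) : V → ℝ := fun y => if y = z then 1 else 0

lemma gL_dd (x z : V) : gL G (dd z) x = gw G x z - (if x = z then gd G x else 0) := by
  unfold gL dd
  by_cases hxz : x = z
  · subst hxz
    rw [show (∑ y, ((if y = x then (1:ℝ) else 0) - (if x = x then (1:ℝ) else 0)) * gw G x y)
        = ∑ y, ((if y = x then gw G x y else 0) - gw G x y) from
      Finset.sum_congr rfl fun y _ => by by_cases h : y = x <;> simp [h]]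
    rw [Finset.sum_sub_distrib, Finset.sum_ite_eq']
    simp [gd]
  · rw [show (∑ y, ((if y = z then (1:ℝ) else 0) - (if x = z then (1:ℝ) else 0)) * gw G x y)
        = ∑ y, (if y = z then gw G x y else 0) from
      Finset.sum_congr rfl fun y _ => by by_cases h : y = z <;> simp [h, hxz]]
    rw [Finset.sum_ite_eq']
    simp [hxz]

lemma gG_dd (u : V → ℝ) (x z : V) :
    gG G u (dd z) x = (1/2) * ((u z - u x) * gw G x z - (if x = z then gL G u x else 0)) := by
  unfold gG dd
  congr 1
  by_cases hxz : x = z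
  · subst hxz
    rw [show (∑ y, (u y - u x) * ((if y = x then (1:ℝ) else 0) - (if x = x then (1:ℝ) else 0)) * gw G x y)
        = ∑ y, -((u y - u x) * gw G x y) from
      Finset.sum_congr rfl fun y _ => by by_cases h : y = x <;> simp [h] <;> ring]
    rw [Finset.sum_neg_distrib]
    simp [gL, gw_self]
  · rw [show (∑ y, (u y - u x) * ((if y = z then (1:ℝ) else 0) - (if x = z then (1:ℝ) else 0)) * gw G x y)
        = ∑ y, (if y = z then (u y - u x) * gw G x y else 0) from
      Finset.sum_congr rfl fun y _ => by by_cases h : y = z <;> simp [h, hxz]]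
    rw [Finset.sum_ite_eq']
    simp [hxz]

lemma gL_gG_dd (u : V → ℝ) (x z : V) (hxz : x ≠ z) :
    gL G (gG G u (dd z)) x
      = (1/2) * (∑ y, (u z - u y) * (gw G y z * gw G x y))
        - (1/2) * (gL G u z * gw G x z)
        - (1/2) * ((u z - u x) * gw G x z) * gd G x := by
  have hfun : gG G u (dd z)
      = fun y => (1/2) * ((u z - u y) * gw G y z - (if y = z then gL G u y else 0)) :=
    funext fun y => gG_dd G u y z
  unfold gL
  simp only [hfun, if_neg hxz, sub_zero]
  rw [show (∑ y, ((1/2) * ((u z - u y) * gw G y z - (if y = z then gL G u y else 0))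
          - (1/2) * ((u z - u x) * gw G x z)) * gw G x y)
      = ∑ y, ((1/2) * ((u z - u y) * (gw G y z * gw G x y))
          - (if y = z then (1/2) * (gL G u y * gw G x y) else 0)
          - (1/2) * ((u z - u x) * gw G x z) * gw G x y) from
    Finset.sum_congr rfl fun y _ => by by_cases h : y = z <;> simp [h] <;> ring]
  rw [Finset.sum_sub_distrib, Finset.sum_sub_distrib, Finset.sum_ite_eq']
  rw [← Finset.mul_sum, ← Finset.mul_sum]
  simp only [Finset.mem_univ, if_true, gL, gd]
  try ring

lemma gG_gL_dd (u : V → ℝ) (x z : V) (hxz : x ≠ z) :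
    gG G u (gL G (dd z)) x
      = (1/2) * (∑ y, (u y - u x) * (gw G y z * gw G x y))
        - (1/2) * ((u z - u x) * gd G z * gw G x z)
        - (1/2) * (gL G u x * gw G x z) := by
  have hfun : gL G (dd z) = fun y => gw G y z - (if y = z then gd G y else 0) :=
    funext fun y => gL_dd G y z
  unfold gG
  simp only [hfun, if_neg hxz, sub_zero]
  rw [show (∑ y, (u y - u x) * ((gw G y z - (if y = z then gd G y else 0)) - gw G x z) * gw G x y)
      = ∑ y, ((u y - u x) * (gw G y z * gw G x y)
          - (if y = z then (u y - u x) * gd G y * gw G x y else 0)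
          - (u y - u x) * gw G x z * gw G x y) from
    Finset.sum_congr rfl fun y _ => by by_cases h : y = z <;> simp [h] <;> ring]
  rw [Finset.sum_sub_distrib, Finset.sum_sub_distrib, Finset.sum_ite_eq']
  rw [show (∑ y, (u y - u x) * gw G x z * gw G x y) = gw G x z * ∑ y, (u y - u x) * gw G x y from
    by rw [Finset.mul_sum]; exact Finset.sum_congr rfl fun y _ => by ring]
  simp only [Finset.mem_univ, if_true]
  unfold gL
  ring

lemma ME (c K : ℝ) (u : V → ℝ) (x z : V) (hxz : x ≠ z)
    (h : PB G c K u (dd z) x = 0) :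
    (∑ y, (u x + u z - 2*u y) * (gw G x y * gw G y z))
      + 2*((gL G u x - gL G u z) * gw G x z)
      + (gd G z - gd G x) * ((u z - u x) * gw G x z)
      = 4*c*(gL G u x * gw G x z) + 2*K*((u z - u x) * gw G x z) := by
  unfold PB gG2 at h
  rw [gL_gG_dd G u x z hxz, gG_dd G (gL G u) x z, gG_gL_dd G u x z hxz, gL_dd G x z,
    gG_dd G u x z] at h
  simp only [if_neg hxz, sub_zero] at h
  have hT : (∑ y, (u x + u z - 2*u y) * (gw G x y * gw G y z))
      = (∑ y, (u z - u y) * (gw G y z * gw G x y)) - ∑ y, (u y - u x) * (gw G y z * gw G x y) := by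
    rw [← Finset.sum_sub_distrib]; exact Finset.sum_congr rfl fun y _ => by ring
  rw [hT]
  linear_combination 4 * h

lemma gw_adj {x y : V} (h : G.Adj x y) : gw G x y = 1 := by simp [gw, h]
lemma gw_nadj {x y : V} (h : ¬ G.Adj x y) : gw G x y = 0 := by simp [gw, h]

def MEhyp (u : V → ℝ) (c K : ℝ) : Prop := ∀ x z : V, x ≠ z →
    (∑ y, (u x + u z - 2*u y) * (gw G x y * gw G y z))
      + 2*((gL G u x - gL G u z) * gw G x z)
      + (gd G z - gd G x) * ((u z - u x) * gw G x z)
      = 4*c*(gL G u x * gw G x z) + 2*K*((u z - u x) * gw G x z)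

lemma Tsym (u : V → ℝ) (x z : V) :
    (∑ y, (u x + u z - 2*u y) * (gw G x y * gw G y z))
      = ∑ y, (u z + u x - 2*u y) * (gw G z y * gw G y x) := by
  refine Finset.sum_congr rfl fun y _ => ?_
  rw [gw_symm G x y, gw_symm G y z]; ring

lemma E1 {u : V → ℝ} {c K : ℝ} (hME : MEhyp G u c K) (hK : 0 < K) {B : Finset V}
    (hharm : ∀ x, x ∉ B → gL G u x = 0) {x z : V} (hx : x ∉ B) (hz : z ∉ B)
    (hadj : G.Adj x z) : u x = u z := by
  have hxz : x ≠ z := G.ne_of_adj hadj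
  have h1 := hME x z hxz
  have h2 := hME z x hxz.symm
  rw [Tsym] at h1
  rw [gw_symm G z x] at h2
  rw [hharm x hx, hharm z hz] at h1 h2
  rw [gw_adj G hadj] at h1 h2
  have h3 : K * (u z - u x) = 0 := by nlinarith [h1, h2]
  rcases mul_eq_zero.mp h3 with h | h
  · linarith
  · linarith

lemma E2 {u : V → ℝ} {σ c K : ℝ} (hME : MEhyp G u c K) (hK : 0 < K)
    (hσK : σ * (1 - c) = K) {B : Finset V}
    (hharm : ∀ x, x ∉ B → gL G u x = 0)
    (heig : ∀ x, x ∈ B → gL G u x = -(σ * u x))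
    {p z : V} (hp : p ∈ B) (hz : z ∉ B) (hadj : G.Adj p z) : u z = 0 := by
  have hpz : p ≠ z := G.ne_of_adj hadj
  have h1 := hME p z hpz
  have h2 := hME z p hpz.symm
  rw [Tsym] at h1
  rw [gw_symm G z p] at h2
  rw [hharm z hz, heig p hp] at h1 h2
  rw [gw_adj G hadj] at h1 h2
  have h3 : K * u z = 0 := by
    linear_combination (-1/4 : ℝ) * h1 + (1/4 : ℝ) * h2 - u p * hσK
  rcases mul_eq_zero.mp h3 with h | h
  · linarith
  · exact h

lemma TB {u : V → ℝ} {p : V} (hnbr : ∀ y, G.Adj p y → u y = 0) (z : V) :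
    ∑ y, (u p + u z - 2*u y) * (gw G p y * gw G y z)
      = (u p + u z) * ∑ y, gw G p y * gw G y z := by
  rw [Finset.mul_sum]
  refine Finset.sum_congr rfl fun y _ => ?_
  by_cases h : G.Adj p y
  · rw [hnbr y h]; ring
  · rw [gw_nadj G h]; ring

lemma E5 {u : V → ℝ} {c K : ℝ} (hME : MEhyp G u c K) {p q : V} (hpq : p ≠ q)
    (hnadj : ¬ G.Adj p q) (hnbr : ∀ y, G.Adj p y → u y = 0) :
    (u p + u q) * (∑ y, gw G p y * gw G y q) = 0 := by
  have h := hME p q hpq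
  rw [gw_nadj G hnadj, TB G hnbr q] at h
  linear_combination h

lemma E6 {u : V → ℝ} {c K : ℝ} (hME : MEhyp G u c K) {p z : V} (hpz : p ≠ z)
    (hnadj : ¬ G.Adj p z) (hnbr : ∀ y, G.Adj p y → u y = 0) (huz : u z = 0) :
    u p * (∑ y, gw G p y * gw G y z) = 0 := by
  have h := hME p z hpz
  rw [gw_nadj G hnadj, TB G hnbr z, huz] at h
  linear_combination h

lemma E7 {u : V → ℝ} {c K : ℝ} (hME : MEhyp G u c K) {x z : V} (hxz : x ≠ z)
    (hnadj : ¬ G.Adj x z) (hux : u x = 0) (huz : u z = 0) :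
    ∑ y, u y * (gw G x y * gw G y z) = 0 := by
  have h := hME x z hxz
  rw [gw_nadj G hnadj, hux, huz] at h
  have h2 : ∑ y, ((0:ℝ) + 0 - 2*u y) * (gw G x y * gw G y z)
      = -2 * ∑ y, u y * (gw G x y * gw G y z) := by
    rw [Finset.mul_sum]
    exact Finset.sum_congr rfl fun y _ => by ring
  rw [h2] at h
  linarith

lemma E8 {u : V → ℝ} {σ c K : ℝ} (hME : MEhyp G u c K) {B : Finset V}
    (hharm : ∀ x, x ∉ B → gL G u x = 0)
    (heig : ∀ x, x ∈ B → gL G u x = -(σ * u x))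
    {p x : V} (hp : p ∈ B) (hx : x ∉ B) (hadj : G.Adj p x)
    (hnbr : ∀ y, G.Adj p y → u y = 0) :
    u p * (∑ y, gw G p y * gw G y x) - 2*(σ*u p) - (gd G x - gd G p)*u p
      = -(4*c*(σ*u p)) - 2*K*u p := by
  have hpx : p ≠ x := G.ne_of_adj hadj
  have h := hME p x hpx
  rw [gw_adj G hadj, TB G hnbr x, hharm x hx, heig p hp,
    hnbr x hadj] at h
  linear_combination h

end Aux

open ENNReal in
/-- rigidity for unit weight: if a graph with boundary with unit
weights satisfies `CD(K,n)` (`K>0`, `n>1`, `n` possibly `∞`) and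
`σ₂ = nK/(n-1)`, then `|V| ∈ {3,4}`; if `|V| = 3` then `K = 1/2`, `n = 2` and
`(G,B)` is a path on 3 vertices with the endpoints as boundary; if `|V| = 4`
then `n = ∞`, `K = 2` and `(G,B)` is a 4-cycle (possibly with the diagonal
between the two interior vertices) with a diagonal pair as boundary. -/
theorem stmt9 (G : SimpleGraph V) [DecidableRel G.Adj] (B : Finset V)
    (hconn : G.Connected)
    (hBind : ∀ x ∈ B, ∀ y ∈ B, ¬ G.Adj x y)
    (hBadj : ∀ x ∈ B, ∃ y, y ∉ B ∧ G.Adj x y)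
    (hBne : B.Nonempty)
    (K : ℝ) (n : ℝ≥0∞) (hK : 0 < K) (hn : 1 < n)
    (hCD : CDE (fun _ => (1 : ℝ)) (fun x y => if G.Adj x y then (1 : ℝ) else 0) K n)
    (hs1 : SteklovEig (fun _ => (1 : ℝ))
      (fun x y => if G.Adj x y then (1 : ℝ) else 0) B (lich n K))
    (hs2 : ∀ σ : ℝ, SteklovEig (fun _ => (1 : ℝ))
      (fun x y => if G.Adj x y then (1 : ℝ) else 0) B σ → 0 < σ → lich n K ≤ σ) :
    (Fintype.card V = 3 ∨ Fintype.card V = 4) ∧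
    (Fintype.card V = 3 → K = 1 / 2 ∧ n = 2 ∧
      ∃ p x q : V, p ≠ q ∧ p ≠ x ∧ q ≠ x ∧ B = {p, q} ∧
        G.Adj p x ∧ G.Adj q x ∧ ¬ G.Adj p q) ∧
    (Fintype.card V = 4 → n = ⊤ ∧ K = 2 ∧
      ∃ p q x y : V, p ≠ q ∧ x ≠ y ∧ B = {p, q} ∧ x ∉ B ∧ y ∉ B ∧
        G.Adj p x ∧ G.Adj p y ∧ G.Adj q x ∧ G.Adj q y ∧ ¬ G.Adj p q) := by
  classical
  obtain ⟨u, ⟨p, hpB, hp0⟩, hharm0, heig0⟩ := hs1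
  set σ : ℝ := lich n K with hσdef
  set c : ℝ := cdC n with hcdef
  have hn0 : n ≠ 0 := (zero_lt_one.trans hn).ne'
  have hc0 : 0 ≤ c := ENNReal.toReal_nonneg
  have hc1 : c < 1 := by
    rw [hcdef, cdC]
    have hinv : n⁻¹ < 1 := ENNReal.inv_lt_one.mpr hn
    have := (ENNReal.toReal_lt_toReal (ENNReal.inv_ne_top.mpr hn0) (by simp)).mpr hinv
    simpa using this
  have hσK : σ * (1 - c) = K := by
    by_cases hT : n = ⊤
    · rw [hσdef, hcdef, lich, cdC, hT]; simp
    · have hr : 1 < n.toReal := by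
        have := (ENNReal.toReal_lt_toReal (by simp) hT).mpr hn
        simpa using this
      rw [hσdef, hcdef, lich, cdC, if_neg hT, ENNReal.toReal_inv]
      have h1 : n.toReal ≠ 0 := by linarith
      have h2 : n.toReal - 1 ≠ 0 := by intro h; rw [sub_eq_zero] at h; linarith [h.symm]
      field_simp
      try ring
  have hσ : 0 < σ := by nlinarith [hσK, hK, hc1]
  have hharm : ∀ x, x ∉ B → gL G u x = 0 := fun x hx => by
    rw [← glap_eq]; exact hharm0 x hx
  have heig : ∀ x, x ∈ B → gL G u x = -(σ * u x) := fun x hx => by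
    have h := heig0 x hx; rw [glap_eq] at h; linarith
  -- CD in PB form
  have hPB : ∀ (f : V → ℝ) (x : V), 0 ≤ PB G c K f f x := by
    intro f x
    have h := hCD f x
    rw [ge_iff_le, gGam2_eq, glap_eq, gGam_eq] at h
    unfold PB
    rw [← hcdef] at h
    nlinarith [h]
  -- pointwise equality
  have hS1 : ∑ x, gL G u x * gL G u x = σ^2 * ∑ x ∈ B, u x ^ 2 := by
    rw [show (∑ x, gL G u x * gL G u x) = ∑ x ∈ B, gL G u x * gL G u x from
      (Finset.sum_subset (Finset.subset_univ B) (fun x _ hx => by rw [hharm x hx]; ring)).symm]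
    rw [Finset.mul_sum]
    exact Finset.sum_congr rfl fun x hx => by rw [heig x hx]; ring
  have hS2 : ∑ x, u x * gL G u x = -(σ * ∑ x ∈ B, u x ^ 2) := by
    rw [show (∑ x, u x * gL G u x) = ∑ x ∈ B, u x * gL G u x from
      (Finset.sum_subset (Finset.subset_univ B) (fun x _ hx => by rw [hharm x hx]; ring)).symm]
    have hstep : ∑ x ∈ B, u x * gL G u x = ∑ x ∈ B, -(σ * u x ^ 2) :=
      Finset.sum_congr rfl fun x hx => by rw [heig x hx]; ring
    rw [hstep, Finset.sum_neg_distrib, ← Finset.mul_sum]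
  have hsumPB : ∑ x, PB G c K u u x = 0 := by
    have hstep : ∑ x, PB G c K u u x
        = (∑ x, gL G u x * gL G u x) - c * (∑ x, gL G u x * gL G u x)
          - K * (- ∑ x, u x * gL G u x) := by
      unfold PB
      rw [Finset.sum_sub_distrib, Finset.sum_sub_distrib, sum_gG2, ← Finset.mul_sum,
        ← Finset.mul_sum, sum_gG]
    rw [hstep, hS1, hS2]
    linear_combination (σ * ∑ x ∈ B, u x ^ 2) * hσK
  have key : ∀ x, PB G c K u u x = 0 := by
    intro x
    exact (Finset.sum_eq_zero_iff_of_nonneg (fun x _ => hPB u x)).mp hsumPB x (Finset.mem_univ x)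
  have hMEall : MEhyp G u c K := fun x z hxz =>
    ME G c K u x z hxz (PB_vanish G c K u x (fun f => hPB f x) (key x) (dd z))
  -- u vanishes on the interior
  have hu0 : ∀ x, x ∉ B → u x = 0 := by
    obtain ⟨b, hbB⟩ := hBne
    have main : ∀ (a e : V) (wlk : G.Walk a e), e ∈ B → a ∉ B → u a = 0 := by
      intro a e wlk
      induction wlk with
      | nil => exact fun he ha => absurd he ha
      | @cons a' v' e' hadj wtail ih =>
        intro he ha
        by_cases hv : v' ∈ B
        · exact E2 G hMEall hK hσK hharm heig hv ha hadj.symm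
        · rw [E1 G hMEall hK hharm ha hv hadj]; exact ih he hv
    intro x hx
    obtain ⟨wlk⟩ := hconn.preconnected x b
    exact main x b wlk hbB hx
  have S1 : ∀ a, a ∈ B → ∀ y, G.Adj a y → y ∉ B := fun a ha y hadj hy => hBind a ha y hy hadj
  have hnbr : ∀ a, a ∈ B → ∀ y, G.Adj a y → u y = 0 := fun a ha y h => hu0 y (S1 a ha y h)
  have hsumB : ∀ x, x ∉ B → ∑ y, u y * gw G x y = 0 := by
    intro x hx
    have h := hharm x hx
    unfold gL at h
    simp only [hu0 x hx, sub_zero] at h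
    exact h
  have heig2 : ∀ a, a ∈ B → gd G a * u a = σ * u a := by
    intro a ha
    have h := heig a ha
    unfold gL at h
    have h0 : ∑ y, u y * gw G a y = 0 := Finset.sum_eq_zero fun y _ => by
      by_cases hy : y ∈ B
      · rw [gw_nadj G (hBind a ha y hy)]; ring
      · rw [hu0 y hy]; ring
    have h2 : ∑ y, (u y - u a) * gw G a y = ∑ y, u y * gw G a y - u a * gd G a := by
      unfold gd
      rw [Finset.mul_sum, ← Finset.sum_sub_distrib]
      exact Finset.sum_congr rfl fun y _ => by ring
    rw [h2, h0] at h
    linarith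
  -- the common second boundary vertex
  have count : ∀ x, G.Adj p x → ∃ qx, qx ∈ B ∧ qx ≠ p ∧ G.Adj x qx ∧ u qx = -u p ∧
      (∀ q', q' ∈ B → q' ≠ p → G.Adj x q' → q' = qx) := by
    intro x hadj
    have hxB : x ∉ B := S1 p hpB x hadj
    set Qx := B.filter (fun r => r ≠ p ∧ G.Adj x r) with hQx
    have hvals : ∀ r ∈ Qx, u r = -u p := by
      intro r hr
      rw [hQx, Finset.mem_filter] at hr
      obtain ⟨hrB, hrp, hradj⟩ := hr
      have h5 := E5 G hMEall (fun h => hrp h.symm) (hBind p hpB r hrB) (hnbr p hpB)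
      have hν : (1:ℝ) ≤ ∑ y, gw G p y * gw G y r := by
        calc (1:ℝ) = gw G p x * gw G x r := by rw [gw_adj G hadj, gw_adj G hradj]; norm_num
        _ ≤ _ := Finset.single_le_sum
            (fun y _ => mul_nonneg (gw_nonneg G p y) (gw_nonneg G y r)) (Finset.mem_univ x)
      rcases mul_eq_zero.mp h5 with h | h
      · linarith
      · linarith
    have hcard : Qx.card = 1 := by
      have hs := hsumB x hxB
      have hpnotQ : p ∉ Qx := by simp [hQx]
      have hsplit : ∑ y, u y * gw G x y = ∑ y ∈ insert p Qx, u y * gw G x y := by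
        refine (Finset.sum_subset (Finset.subset_univ _) ?_).symm
        intro y _ hy
        by_cases hyB : y ∈ B
        · have hynp : y ≠ p := fun h => hy (h ▸ Finset.mem_insert_self p Qx)
          have : ¬ G.Adj x y := fun hA =>
            hy (Finset.mem_insert_of_mem (by rw [hQx, Finset.mem_filter]; exact ⟨hyB, hynp, hA⟩))
          rw [gw_nadj G this]; ring
        · rw [hu0 y hyB]; ring
      rw [hsplit, Finset.sum_insert hpnotQ] at hs
      have hQsum : ∑ r ∈ Qx, u r * gw G x r = (Qx.card : ℝ) * (-u p) := by
        rw [Finset.sum_congr rfl (fun r hr => ?_), Finset.sum_const, nsmul_eq_mul]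
        have hr' := hr
        rw [hQx, Finset.mem_filter] at hr'
        rw [hvals r hr, gw_adj G hr'.2.2, mul_one]
      rw [hQsum, gw_adj G hadj.symm, mul_one] at hs
      have h1 : ((Qx.card:ℝ) - 1) * u p = 0 := by linarith [hs]
      rcases mul_eq_zero.mp h1 with h | h
      · have : (Qx.card : ℝ) = 1 := by linarith
        exact_mod_cast this
      · exact absurd h hp0
    obtain ⟨qx, hqx⟩ := Finset.card_eq_one.mp hcard
    have hqxm : qx ∈ Qx := hqx ▸ Finset.mem_singleton_self qx
    have hqxm' := hqxm
    rw [hQx, Finset.mem_filter] at hqxm'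
    refine ⟨qx, hqxm'.1, hqxm'.2.1, hqxm'.2.2, hvals qx hqxm, ?_⟩
    intro q' hq'B hq'p hq'adj
    have : q' ∈ Qx := by rw [hQx, Finset.mem_filter]; exact ⟨hq'B, hq'p, hq'adj⟩
    rw [hqx] at this
    exact Finset.mem_singleton.mp this
  obtain ⟨x0, hx0B, hx0adj⟩ := hBadj p hpB
  obtain ⟨q, hqB, hqp, hx0q, huq, huniq0⟩ := count x0 hx0adj
  have hpq : p ≠ q := fun h => hqp h.symm
  have hq0 : u q ≠ 0 := by rw [huq]; exact neg_ne_zero.mpr hp0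
  have hnadjpq : ¬ G.Adj p q := hBind p hpB q hqB
  have hx0sum : ∀ z : V, ∑ y, u y * (gw G x0 y * gw G y z) = u p * gw G p z + u q * gw G q z := by
    intro z
    rw [show (∑ y, u y * (gw G x0 y * gw G y z))
        = ∑ y ∈ ({p, q} : Finset V), u y * (gw G x0 y * gw G y z) from
      (Finset.sum_subset (Finset.subset_univ _) ?_).symm]
    · rw [Finset.sum_insert (by simp [hpq]), Finset.sum_singleton,
        gw_adj G hx0adj.symm, gw_adj G hx0q]
      ring
    · intro y _ hy
      simp only [Finset.mem_insert, Finset.mem_singleton] at hy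
      push_neg at hy
      by_cases hyB : y ∈ B
      · have : ¬ G.Adj x0 y := fun hA => hy.2 (huniq0 y hyB hy.1 hA)
        rw [gw_nadj G this]; ring
      · rw [hu0 y hyB]; ring
  have hWq : ∀ x, G.Adj p x → G.Adj x q ∧ ∀ q', q' ∈ B → q' ≠ p → G.Adj x q' → q' = q := by
    intro x hadj
    have hxB : x ∉ B := S1 p hpB x hadj
    obtain ⟨qx, hqxB, hqxp, hxqx, huqx, huniqx⟩ := count x hadj
    suffices hqq : qx = q by
      subst hqq; exact ⟨hxqx, huniqx⟩
    by_cases hxx0 : x = x0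
    · subst hxx0; exact huniq0 qx hqxB hqxp hxqx
    by_cases hadjx : G.Adj x x0
    · have hqxadjx0 : G.Adj qx x0 := by
        by_contra hnadj
        have h6 := E6 G hMEall (show qx ≠ x0 from fun h => hx0B (h ▸ hqxB)) hnadj
          (hnbr qx hqxB) (hu0 x0 hx0B)
        have hν : (1:ℝ) ≤ ∑ y, gw G qx y * gw G y x0 := by
          calc (1:ℝ) = gw G qx x * gw G x x0 := by
                rw [gw_adj G hxqx.symm, gw_adj G hadjx]; norm_num
          _ ≤ _ := Finset.single_le_sum
              (fun y _ => mul_nonneg (gw_nonneg G qx y) (gw_nonneg G y x0)) (Finset.mem_univ x)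
        rcases mul_eq_zero.mp h6 with h | h
        · rw [huqx] at h; exact hp0 (by linarith)
        · linarith
      exact huniq0 qx hqxB hqxp hqxadjx0.symm
    · have h7 := E7 G hMEall (show x0 ≠ x from fun h => hxx0 h.symm)
        (fun hA => hadjx hA.symm) (hu0 x0 hx0B) (hu0 x hxB)
      rw [hx0sum x, gw_adj G hadj, huq] at h7
      have h8 : (1 - gw G q x) * u p = 0 := by linarith [h7]
      have hadjqx : G.Adj q x := by
        rcases mul_eq_zero.mp h8 with h | h
        · by_contra hnq
          rw [gw_nadj G hnq] at h
          norm_num at h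
        · exact absurd h hp0
      exact (huniqx q hqB hqp hadjqx.symm).symm
  have hNq : ∀ x', G.Adj q x' → G.Adj p x' := by
    intro x' hadj'
    have hx'B : x' ∉ B := S1 q hqB x' hadj'
    by_cases hxx0 : x' = x0
    · subst hxx0; exact hx0adj
    by_cases hadjx : G.Adj x0 x'
    · by_contra hnadj
      have h6 := E6 G hMEall (show p ≠ x' from fun h => hx'B (h ▸ hpB)) hnadj
        (hnbr p hpB) (hu0 x' hx'B)
      have hν : (1:ℝ) ≤ ∑ y, gw G p y * gw G y x' := by
        calc (1:ℝ) = gw G p x0 * gw G x0 x' := by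
              rw [gw_adj G hx0adj, gw_adj G hadjx]; norm_num
        _ ≤ _ := Finset.single_le_sum
            (fun y _ => mul_nonneg (gw_nonneg G p y) (gw_nonneg G y x')) (Finset.mem_univ x0)
      rcases mul_eq_zero.mp h6 with h | h
      · exact hp0 h
      · linarith
    · have h7 := E7 G hMEall (show x0 ≠ x' from fun h => hxx0 h.symm)
        hadjx (hu0 x0 hx0B) (hu0 x' hx'B)
      rw [hx0sum x', gw_adj G hadj', huq] at h7
      by_contra hnadj
      rw [gw_nadj G hnadj] at h7
      exact hp0 (by linarith)
  -- closure
  set W : Finset V := Finset.univ.filter (fun y => G.Adj p y) with hWdef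
  have hmemW : ∀ y, y ∈ W ↔ G.Adj p y := by
    intro y; rw [hWdef, Finset.mem_filter]; simp
  have hpW : p ∉ W := fun h => G.irrefl ((hmemW p).mp h)
  have hqW : q ∉ W := fun h => hnadjpq ((hmemW q).mp h)
  set C : Finset V := insert p (insert q W) with hCdef
  have hpC : p ∈ C := Finset.mem_insert_self p _
  have hx0W : x0 ∈ W := (hmemW x0).mpr hx0adj
  have hclosed : ∀ v, v ∈ C → ∀ y, G.Adj v y → y ∈ C := by
    intro v hv y hady
    rw [hCdef, Finset.mem_insert, Finset.mem_insert] at hv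
    rcases hv with hv | hv | hv
    · subst hv
      exact Finset.mem_insert_of_mem (Finset.mem_insert_of_mem ((hmemW y).mpr hady))
    · subst hv
      exact Finset.mem_insert_of_mem (Finset.mem_insert_of_mem ((hmemW y).mpr (hNq y hady)))
    · have hadjpv : G.Adj p v := (hmemW v).mp hv
      by_cases hyB : y ∈ B
      · by_cases hyp : y = p
        · subst hyp; exact hpC
        · have hyq := (hWq v hadjpv).2 y hyB hyp hady
          rw [hCdef, hyq]
          exact Finset.mem_insert_of_mem (Finset.mem_insert_self q W)
      · by_cases hadjpy : G.Adj p y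
        · exact Finset.mem_insert_of_mem (Finset.mem_insert_of_mem ((hmemW y).mpr hadjpy))
        · exfalso
          have h6 := E6 G hMEall (show p ≠ y from fun h => hyB (h ▸ hpB)) hadjpy
            (hnbr p hpB) (hu0 y hyB)
          have hν : (1:ℝ) ≤ ∑ z, gw G p z * gw G z y := by
            calc (1:ℝ) = gw G p v * gw G v y := by
                  rw [gw_adj G hadjpv, gw_adj G hady]; norm_num
            _ ≤ _ := Finset.single_le_sum
                (fun z _ => mul_nonneg (gw_nonneg G p z) (gw_nonneg G z y)) (Finset.mem_univ v)
          rcases mul_eq_zero.mp h6 with h | h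
          · exact hp0 h
          · linarith
  have hall : ∀ v, v ∈ C := by
    have main : ∀ (a e : V) (wlk2 : G.Walk a e), a ∈ C → e ∈ C := by
      intro a e wlk2
      induction wlk2 with
      | nil => exact id
      | @cons a' v' e' hadj wtail ih => exact fun ha => ih (hclosed a' ha v' hadj)
    intro v
    obtain ⟨wlk⟩ := hconn.preconnected p v
    exact main p v wlk hpC
  have hcard : Fintype.card V = 2 + W.card := by
    rw [← Finset.card_univ, ← Finset.eq_univ_iff_forall.mpr hall, hCdef,
      Finset.card_insert_of_notMem (by simp [hpq, hpW]),
      Finset.card_insert_of_notMem hqW]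
    omega
  -- degree bookkeeping
  have hgdp : gd G p = (W.card : ℝ) := by
    unfold gd gw
    rw [Finset.sum_boole]
  have hσd : gd G p = σ := by
    have h := heig2 p hpB
    have := mul_right_cancel₀ hp0 h
    exact this
  have hνx0 : ∑ y, gw G p y * gw G y x0 = gd G x0 - 2 := by
    have hper : ∀ y, gw G x0 y - gw G p y * gw G y x0
        = (if y = p then (1:ℝ) else if y = q then 1 else 0) := by
      intro y
      by_cases hyp : y = p
      · subst hyp
        rw [gw_adj G hx0adj.symm, gw_self, if_pos rfl]
        ring
      by_cases hyq : y = q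
      · subst hyq
        rw [gw_adj G hx0q, gw_nadj G hnadjpq, if_neg hyp, if_pos rfl]
        ring
      rw [if_neg hyp, if_neg hyq]
      by_cases hyB : y ∈ B
      · have hna : ¬ G.Adj x0 y := fun hA => hyq (huniq0 y hyB hyp hA)
        rw [gw_nadj G hna, gw_symm G y x0, gw_nadj G hna]
        ring
      · by_cases hAx : G.Adj x0 y
        · have hyC := hclosed x0 (Finset.mem_insert_of_mem (Finset.mem_insert_of_mem hx0W)) y hAx
          rw [hCdef, Finset.mem_insert, Finset.mem_insert] at hyC
          rcases hyC with h | h | h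
          · exact absurd h hyp
          · exact absurd h hyq
          · rw [gw_adj G hAx, gw_adj G ((hmemW y).mp h), gw_symm G y x0, gw_adj G hAx]
            ring
        · rw [gw_nadj G hAx, gw_symm G y x0, gw_nadj G hAx]
          ring
    have hsum2 : ∑ y, (gw G x0 y - gw G p y * gw G y x0) = 2 := by
      rw [Finset.sum_congr rfl (fun y _ => hper y)]
      rw [show (∑ y, (if y = p then (1:ℝ) else if y = q then 1 else 0))
          = ∑ y ∈ ({p, q} : Finset V), (if y = p then (1:ℝ) else if y = q then 1 else 0) from
        (Finset.sum_subset (Finset.subset_univ _) (fun y _ hy => by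
          simp only [Finset.mem_insert, Finset.mem_singleton] at hy
          push_neg at hy
          rw [if_neg hy.1, if_neg hy.2])).symm]
      rw [Finset.sum_insert (by simp [hpq]), Finset.sum_singleton, if_pos rfl,
        if_neg hqp, if_pos rfl]
      norm_num
    rw [Finset.sum_sub_distrib] at hsum2
    have : ∑ y, gw G x0 y = gd G x0 := rfl
    rw [this] at hsum2
    linarith
  have h8 := E8 G hMEall hharm heig hpB hx0B hx0adj (hnbr p hpB)
  rw [hνx0, hσd] at h8
  have harith : σ + 2 - 4*c*σ - 2*K = 0 := by
    have h9 : (σ + 2 - 4*c*σ - 2*K) * u p = 0 := by linear_combination -h8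
    rcases mul_eq_zero.mp h9 with h | h
    · exact h
    · exact absurd h hp0
  have hfin : σ * (1 + 2*c) = 2 := by linear_combination (-1 : ℝ) * harith + 2 * hσK
  have hm : σ = (W.card : ℝ) := by rw [← hσd, hgdp]
  have hm1 : 1 ≤ W.card := Finset.card_pos.mpr ⟨x0, hx0W⟩
  have hm2 : W.card ≤ 2 := by
    by_contra hcon
    push_neg at hcon
    have : (3:ℝ) ≤ σ := by
      rw [hm]
      exact_mod_cast hcon
    nlinarith [hfin, hc0, this]
  -- conversions n from c
  have hn2 : c = 1/2 → n = 2 := by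
    intro hc
    have hnt : n ≠ ⊤ := by
      intro h
      rw [hcdef, h] at hc
      simp [cdC] at hc
    have h2 : ((2:ℝ≥0∞)⁻¹).toReal = 1/2 := by
      rw [ENNReal.toReal_inv]
      norm_num
    have hinj : n⁻¹ = (2:ℝ≥0∞)⁻¹ := by
      refine (ENNReal.toReal_eq_toReal_iff' (ENNReal.inv_ne_top.mpr hn0) ?_).mp ?_
      · exact ENNReal.inv_ne_top.mpr (by norm_num)
      · rw [h2, ← cdC, ← hcdef, hc]
    rw [← inv_inv n, hinj, inv_inv]
  have hnT : c = 0 → n = ⊤ := by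
    intro hc
    by_contra h
    have hne : n⁻¹ ≠ 0 := ENNReal.inv_ne_zero.mpr h
    have hpos : 0 < (n⁻¹).toReal := ENNReal.toReal_pos hne (ENNReal.inv_ne_top.mpr hn0)
    rw [hcdef, cdC] at hc
    linarith
  -- B = {p, q}
  have hBpq : B = {p, q} := by
    apply Finset.Subset.antisymm
    · intro b hb
      have := hall b
      rw [hCdef, Finset.mem_insert, Finset.mem_insert] at this
      rcases this with h | h | h
      · simp [h]
      · simp [h]
      · exact absurd ((hmemW b).mp h) (hBind p hpB b hb)
    · intro b hb
      simp only [Finset.mem_insert, Finset.mem_singleton] at hb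
      rcases hb with h | h
      · exact h ▸ hpB
      · exact h ▸ hqB
  -- case analysis on W.card
  rcases (by omega : W.card = 1 ∨ W.card = 2) with hWc | hWc
  · -- |V| = 3, path case
    have hσ1 : σ = 1 := by rw [hm, hWc]; norm_num
    have hc12 : c = 1/2 := by rw [hσ1] at hfin; linarith
    have hK12 : K = 1/2 := by rw [← hσK, hσ1, hc12]; norm_num
    have hcard3 : Fintype.card V = 3 := by rw [hcard, hWc]
    refine ⟨Or.inl hcard3, fun _ => ⟨hK12, hn2 hc12, ?_⟩, fun h4 => absurd (hcard3 ▸ h4) (by norm_num)⟩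
    exact ⟨p, x0, q, hpq, hx0adj.ne, (hx0q.symm).ne, hBpq, hx0adj, hx0q.symm, hnadjpq⟩
  · -- |V| = 4, cycle case
    have hσ2 : σ = 2 := by rw [hm, hWc]; norm_num
    have hc02 : c = 0 := by rw [hσ2] at hfin; linarith
    have hK2 : K = 2 := by rw [← hσK, hσ2, hc02]; norm_num
    have hcard4 : Fintype.card V = 4 := by rw [hcard, hWc]
    refine ⟨Or.inr hcard4, fun h3 => absurd (hcard4 ▸ h3) (by norm_num), fun _ => ⟨hnT hc02, hK2, ?_⟩⟩
    obtain ⟨x, y, hxy, hWxy⟩ := Finset.card_eq_two.mp hWc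
    have hxW : x ∈ W := by rw [hWxy]; simp
    have hyW : y ∈ W := by rw [hWxy]; simp
    have hpx : G.Adj p x := (hmemW x).mp hxW
    have hpy : G.Adj p y := (hmemW y).mp hyW
    have hqx : G.Adj q x := ((hWq x hpx).1).symm
    have hqy : G.Adj q y := ((hWq y hpy).1).symm
    exact ⟨p, q, x, y, hpq, hxy, hBpq, S1 p hpB x hpx, S1 p hpB y hpy,
      hpx, hpy, hqx, hqy, hnadjpq⟩
end

section
/- Under assumptions (A1)-(A4), for any f,g ∈ ℝ^V and any interior vertex x: Γ(f,g)(x) = Γ^Ω(f,g)(x) + (Deg_b/2)f(x)g(x) − (Deg_b/4)(f(1)+f(2))g(x) − (Deg_b/4)(g(1)+g(2))f(x) + (Deg_b/4)(f(1)g(1)+f(2)g(2)), where Γ^Ω is the carré du champ of the induced graph on Ω. -/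
open Finset

variable {V : Type*} [Fintype V] [DecidableEq V]

lemma gGam_sum (m : V → ℝ) (w : V → V → ℝ) (f g : V → ℝ) (x : V) :
    gGam m w f g x = (1 / (2 * m x)) * ∑ z, (f z - f x) * (g z - g x) * w x z := by
  unfold gGam glap
  have h : ∑ z, (f z - f x) * (g z - g x) * w x z
      = (∑ y, ((fun z => f z * g z) y - (fun z => f z * g z) x) * w x y)
        - g x * ∑ y, (f y - f x) * w x y - f x * ∑ y, (g y - g x) * w x y := by
    rw [Finset.mul_sum, Finset.mul_sum, ← Finset.sum_sub_distrib, ← Finset.sum_sub_distrib]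
    exact Finset.sum_congr rfl fun z _ => by ring
  rw [h]
  ring

/-- under (A1)-(A4), for any `f, g` and interior `x`,
`Γ(f,g)(x) = Γ^Ω(f,g)(x) + (Deg_b/2) f(x)g(x) - (Deg_b/4)(f(1)+f(2))g(x)
 - (Deg_b/4)(g(1)+g(2))f(x) + (Deg_b/4)(f(1)g(1)+f(2)g(2))`
with `Deg_b = (n+2)K/(n-1)`. -/
theorem stmt11 (m : V → ℝ) (w : V → V → ℝ) (a b : V) (hW : WeightedGraph m w)
    (K n : ℝ) (hK : 0 < K) (hn : 1 < n)
    (hab : a ≠ b) (hnadj : w a b = 0)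
    (hm : m a = m b)
    (hadj : ∀ x, x ∉ ({a, b} : Finset V) → 0 < w a x)
    (hwe : ∀ x, x ∉ ({a, b} : Finset V) → w a x = w b x)
    (hDega : (1 / m a) * ∑ y, w a y = n * K / (n - 1))
    (hDegb : (1 / m b) * ∑ y, w b y = n * K / (n - 1))
    (hDb : ∀ x, x ∉ ({a, b} : Finset V) → 2 * w a x / m x = (n + 2) * K / (n - 1)) :
    ∀ (f g : V → ℝ) (x : V), x ∉ ({a, b} : Finset V) →
      gGam m w f g x = gGam m (wRes {a, b} w) f g x
        + ((n + 2) * K / (n - 1) / 2) * f x * g x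
        - ((n + 2) * K / (n - 1) / 4) * (f a + f b) * g x
        - ((n + 2) * K / (n - 1) / 4) * (g a + g b) * f x
        + ((n + 2) * K / (n - 1) / 4) * (f a * g a + f b * g b) := by
  intro f g x hx
  have hma : m x ≠ 0 := ne_of_gt (hW.1 x)
  have hsym := hW.2.1
  set c := w a x with hcdef
  have hc : 2 * c / m x = (n + 2) * K / (n - 1) := hDb x hx
  have hxa : x ≠ a := by rintro rfl; exact hx (by simp)
  have hxb : x ≠ b := by rintro rfl; exact hx (by simp)
  have hwxa : w x a = c := hsym x a
  have hwxb : w x b = c := by rw [hsym x b, ← hwe x hx]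
  rw [gGam_sum, gGam_sum]
  have hsplit : ∑ z, (f z - f x) * (g z - g x) * w x z
      = (∑ z, (f z - f x) * (g z - g x) * wRes {a, b} w x z)
        + ((f a - f x) * (g a - g x) * c + (f b - f x) * (g b - g x) * c) := by
    have key : ∀ z : V, (f z - f x) * (g z - g x) * w x z
        = (f z - f x) * (g z - g x) * wRes {a, b} w x z
          + (if z ∈ ({a, b} : Finset V) then (f z - f x) * (g z - g x) * w x z else 0) := by
      intro z
      unfold wRes
      by_cases hz : z ∈ ({a, b} : Finset V)
      · simp [hz]
      · simp [hz, hx]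
    rw [Finset.sum_congr rfl (fun z _ => key z), Finset.sum_add_distrib, Finset.sum_ite_mem,
      Finset.univ_inter, Finset.sum_pair hab, hwxa, hwxb]
  rw [hsplit, ← hc]
  field_simp
  ring
end

section
/- Under assumptions (A1)-(A4), for any f ∈ ℝ^V with f(1) = 0: Γ₂(f,f)(1) = (Deg_b/(2m))⟨df,df⟩_Ω + (Deg_b(3Deg_b − Deg)/(8m))⟨f,f⟩_Ω + (Deg_b²/(8m²))⟨f,1⟩_Ω² + (Deg_b·Deg/8)f(2)² − (Deg_b²/(4m))⟨f,1⟩_Ω f(2). -/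
open Finset

variable {V : Type*} [Fintype V] [DecidableEq V]

lemma gGam_eq_s13 (m : V → ℝ) (w : V → V → ℝ) (u v : V → ℝ) (x : V) (hm : m x ≠ 0) :
    gGam m w u v x = (1 / (2 * m x)) * ∑ y, (u y - u x) * (v y - v x) * w x y := by
  have h : ∑ y, (u y - u x) * (v y - v x) * w x y
      = (∑ y, (u y * v y - u x * v x) * w x y) - v x * ∑ y, (u y - u x) * w x y
        - u x * ∑ y, (v y - v x) * w x y := by
    rw [Finset.mul_sum, Finset.mul_sum, ← Finset.sum_sub_distrib, ← Finset.sum_sub_distrib]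
    exact Finset.sum_congr rfl fun y _ => by ring
  simp only [gGam, glap]
  rw [h]
  field_simp

lemma gGam_symm (m : V → ℝ) (w : V → V → ℝ) (u v : V → ℝ) (x : V) :
    gGam m w u v x = gGam m w v u x := by
  simp only [gGam]
  rw [show (fun z => u z * v z) = (fun z => v z * u z) from funext fun z => mul_comm _ _]
  ring


private lemma stmt13_alg (c Db D T Q E fb : ℝ) (hc : c ≠ 0) :
    1/2 * ((1 / c * ((Db / 4 * (Db / 2 * Q)
          + Db / 4 * (fb * fb * (D * c) - Db * fb * T + Db / 2 * Q) + Db / 4 * E)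
        - (D * c) * (1 / (2 * c) * (Db / 2 * Q))))
      - (1 / (2 * c) * ((Db / 2 * (Db / 2 * fb * T) - Db * (Db / 2 * Q)
          + Db / 2 * (-(1 / 2) * E))
        - (1 / c * (Db / 2 * T)) * (Db / 2 * T)))
      - (1 / (2 * c) * ((Db / 2 * (Db / 2 * fb * T) - Db * (Db / 2 * Q)
          + Db / 2 * (-(1 / 2) * E))
        - (1 / c * (Db / 2 * T)) * (Db / 2 * T))))
    = (Db / (2 * c)) * (1/2 * E)
      + (Db * (3 * Db - D) / (8 * c)) * Q
      + (Db ^ 2 / (8 * c ^ 2)) * T ^ 2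
      + (Db * D / 8) * fb ^ 2
      - (Db ^ 2 / (4 * c)) * T * fb := by
  field_simp
  ring

set_option maxHeartbeats 4000000 in
/-- under (A1)-(A4), for `f` with `f(1) = 0`:
`Γ₂(f,f)(1) = (Deg_b/(2m))⟨df,df⟩_Ω + (Deg_b(3Deg_b-Deg)/(8m))⟨f,f⟩_Ω
 + (Deg_b²/(8m²))⟨f,1⟩_Ω² + (Deg_b·Deg/8)f(2)² - (Deg_b²/(4m))⟨f,1⟩_Ω f(2)`,
with `Deg = nK/(n-1)`, `Deg_b = (n+2)K/(n-1)`. -/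
theorem stmt13 (m : V → ℝ) (w : V → V → ℝ) (a b : V) (hW : WeightedGraph m w)
    (K n : ℝ) (hK : 0 < K) (hn : 1 < n)
    (hab : a ≠ b) (hnadj : w a b = 0)
    (hm : m a = m b)
    (hadj : ∀ x, x ∉ ({a, b} : Finset V) → 0 < w a x)
    (hwe : ∀ x, x ∉ ({a, b} : Finset V) → w a x = w b x)
    (hDega : (1 / m a) * ∑ y, w a y = n * K / (n - 1))
    (hDegb : (1 / m b) * ∑ y, w b y = n * K / (n - 1))
    (hDb : ∀ x, x ∉ ({a, b} : Finset V) → 2 * w a x / m x = (n + 2) * K / (n - 1)) :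
    ∀ f : V → ℝ, f a = 0 →
      gGam2 m w f f a
        = ((n + 2) * K / (n - 1) / (2 * m a)) * eip (wRes {a, b} w) f f
          + (((n + 2) * K / (n - 1)) * (3 * ((n + 2) * K / (n - 1)) - n * K / (n - 1))
              / (8 * m a)) * (∑ x ∈ ({a, b} : Finset V)ᶜ, f x * f x * m x)
          + (((n + 2) * K / (n - 1)) ^ 2 / (8 * (m a) ^ 2))
              * (∑ x ∈ ({a, b} : Finset V)ᶜ, f x * m x) ^ 2
          + (((n + 2) * K / (n - 1)) * (n * K / (n - 1)) / 8) * (f b) ^ 2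
          - (((n + 2) * K / (n - 1)) ^ 2 / (4 * m a))
              * (∑ x ∈ ({a, b} : Finset V)ᶜ, f x * m x) * f b := by
  intro f hfa
  obtain ⟨hmpos, hsym, hwnn, hloop⟩ := hW
  have hmx : ∀ x : V, m x ≠ 0 := fun x => (hmpos x).ne'
  set D := n * K / (n - 1) with hD_def
  set Db := (n + 2) * K / (n - 1) with hDb_def
  set Ω := ({a, b} : Finset V)ᶜ with hΩ_def
  set T := ∑ x ∈ Ω, f x * m x with hT_def
  set Q := ∑ x ∈ Ω, f x * f x * m x with hQ_def
  set E := ∑ x ∈ Ω, ∑ y ∈ Ω, (f y - f x) * (f y - f x) * w x y with hE_def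
  clear_value D Db Ω T Q E
  have hwab : w a b = 0 := hnadj
  have hmemΩ : ∀ x ∈ Ω, x ∉ ({a, b} : Finset V) := by
    intro x hx
    rw [hΩ_def] at hx
    exact Finset.mem_compl.mp hx
  have hwax : ∀ x ∈ Ω, w a x = Db * m x / 2 := by
    intro x hx
    have h := hDb x (hmemΩ x hx)
    field_simp [hmx x] at h
    linarith
  have hwxa : ∀ x ∈ Ω, w x a = w a x := fun x _ => hsym x a
  have hwxb : ∀ x ∈ Ω, w x b = w a x := fun x hx => by
    rw [hsym x b, ← hwe x (hmemΩ x hx)]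
  have hsplit : ∀ g : V → ℝ, ∑ y, g y = g a + g b + ∑ x ∈ Ω, g x := by
    intro g
    rw [← Finset.sum_add_sum_compl ({a, b} : Finset V) g, Finset.sum_pair hab, hΩ_def]
  have hSw : ∑ x ∈ Ω, w a x = D * m a := by
    have h := hDega
    rw [hsplit (fun y => w a y), hloop a, hwab] at h
    field_simp [hmx a] at h
    linarith
  have hS1 : ∑ x ∈ Ω, f x * w a x = Db / 2 * T := by
    rw [hT_def, Finset.mul_sum]
    exact Finset.sum_congr rfl fun x hx => by rw [hwax x hx]; ring
  have hS1' : ∑ x ∈ Ω, f x * f b * w a x = Db / 2 * f b * T := by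
    rw [hT_def, Finset.mul_sum]
    exact Finset.sum_congr rfl fun x hx => by rw [hwax x hx]; ring
  have hS2 : ∑ x ∈ Ω, f x * f x * w a x = Db / 2 * Q := by
    rw [hQ_def, Finset.mul_sum]
    exact Finset.sum_congr rfl fun x hx => by rw [hwax x hx]; ring
  have hSP : ∑ x ∈ Ω, (f b - f x) * (f b - f x) * w a x
      = f b * f b * (D * m a) - Db * f b * T + Db / 2 * Q := by
    have h1 : ∀ x ∈ Ω, (f b - f x) * (f b - f x) * w a x
        = f b * f b * w a x - 2 * f b * (f x * w a x) + f x * f x * w a x :=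
      fun x _ => by ring
    rw [Finset.sum_congr rfl h1, Finset.sum_add_distrib, Finset.sum_sub_distrib,
      ← Finset.mul_sum, ← Finset.mul_sum, hSw, hS1, hS2]
    ring
  have hA : ∑ x ∈ Ω, ∑ y ∈ Ω, f x * ((f y - f x) * w x y) = -(1 / 2) * E := by
    have h0 : ∑ x ∈ Ω, ∑ y ∈ Ω, (f x * ((f y - f x) * w x y) + f y * ((f x - f y) * w x y)
        + (f y - f x) * (f y - f x) * w x y) = 0 :=
      Finset.sum_eq_zero fun x _ => Finset.sum_eq_zero fun y _ => by ring
    have h1 : ∑ x ∈ Ω, ∑ y ∈ Ω, f y * ((f x - f y) * w x y)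
        = ∑ x ∈ Ω, ∑ y ∈ Ω, f x * ((f y - f x) * w x y) := by
      rw [Finset.sum_comm]
      exact Finset.sum_congr rfl fun x _ => Finset.sum_congr rfl fun y _ => by rw [hsym y x]
    simp only [Finset.sum_add_distrib] at h0
    rw [h1] at h0
    rw [hE_def]
    linarith
  have hGa : gGam m w f f a = 1 / (2 * m a) * (Db / 2 * Q) := by
    rw [gGam_eq_s13 m w f f a (hmx a), hsplit (fun y => (f y - f a) * (f y - f a) * w a y),
      hfa, hloop a, hwab]
    have h : ∑ x ∈ Ω, (f x - 0) * (f x - 0) * w a x = Db / 2 * Q := by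
      rw [hQ_def, Finset.mul_sum]
      exact Finset.sum_congr rfl fun x hx => by rw [hwax x hx]; ring
    rw [h]
    ring
  have hGx : ∀ x ∈ Ω, gGam m w f f x * w a x
      = Db / 4 * (f x * f x * w a x) + Db / 4 * ((f b - f x) * (f b - f x) * w a x)
        + Db / 4 * (∑ y ∈ Ω, (f y - f x) * (f y - f x) * w x y) := by
    intro x hx
    rw [gGam_eq_s13 m w f f x (hmx x), hsplit (fun y => (f y - f x) * (f y - f x) * w x y),
      hfa, hwxa x hx, hwxb x hx, hwax x hx]
    field_simp [hmx x]
    ring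
  have hGsum : ∑ x ∈ Ω, gGam m w f f x * w a x
      = Db / 4 * (Db / 2 * Q)
        + Db / 4 * (f b * f b * (D * m a) - Db * f b * T + Db / 2 * Q) + Db / 4 * E := by
    rw [Finset.sum_congr rfl hGx, Finset.sum_add_distrib, Finset.sum_add_distrib,
      ← Finset.mul_sum, ← Finset.mul_sum, ← Finset.mul_sum, hS2, hSP, ← hE_def]
  have hglapG : glap m w (gGam m w f f) a
      = 1 / m a * ((Db / 4 * (Db / 2 * Q)
          + Db / 4 * (f b * f b * (D * m a) - Db * f b * T + Db / 2 * Q) + Db / 4 * E)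
        - (D * m a) * (1 / (2 * m a) * (Db / 2 * Q))) := by
    simp only [glap]
    rw [hsplit (fun y => (gGam m w f f y - gGam m w f f a) * w a y), hloop a, hwab]
    have h : ∑ x ∈ Ω, (gGam m w f f x - gGam m w f f a) * w a x
        = (∑ x ∈ Ω, gGam m w f f x * w a x) - (∑ x ∈ Ω, w a x) * gGam m w f f a := by
      rw [Finset.sum_mul, ← Finset.sum_sub_distrib]
      exact Finset.sum_congr rfl fun x _ => by ring
    rw [h, hGsum, hSw, hGa]
    ring
  have hL : glap m w f a = 1 / m a * (Db / 2 * T) := by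
    simp only [glap]
    rw [hsplit (fun y => (f y - f a) * w a y), hfa, hloop a, hwab]
    have h : ∑ x ∈ Ω, (f x - 0) * w a x = Db / 2 * T := by
      rw [hT_def, Finset.mul_sum]
      exact Finset.sum_congr rfl fun x hx => by rw [hwax x hx]; ring
    rw [h]
    ring
  have hLx : ∀ x ∈ Ω, glap m w f x * (f x * w a x)
      = Db / 2 * (f x * f b * w a x) - Db * (f x * f x * w a x)
        + Db / 2 * (∑ y ∈ Ω, f x * ((f y - f x) * w x y)) := by
    intro x hx
    have hd : ∑ y ∈ Ω, f x * ((f y - f x) * w x y)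
        = f x * ∑ y ∈ Ω, (f y - f x) * w x y := by rw [Finset.mul_sum]
    simp only [glap]
    rw [hsplit (fun y => (f y - f x) * w x y), hfa, hwxa x hx, hwxb x hx, hwax x hx, hd]
    field_simp [hmx x]
    ring
  have hLsum : ∑ x ∈ Ω, glap m w f x * (f x * w a x)
      = Db / 2 * (Db / 2 * f b * T) - Db * (Db / 2 * Q) + Db / 2 * (-(1 / 2) * E) := by
    rw [Finset.sum_congr rfl hLx, Finset.sum_add_distrib, Finset.sum_sub_distrib,
      ← Finset.mul_sum, ← Finset.mul_sum, ← Finset.mul_sum, hS1', hS2, hA]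
  have hGamLf : gGam m w (glap m w f) f a
      = 1 / (2 * m a) * ((Db / 2 * (Db / 2 * f b * T) - Db * (Db / 2 * Q)
          + Db / 2 * (-(1 / 2) * E))
        - (1 / m a * (Db / 2 * T)) * (Db / 2 * T)) := by
    rw [gGam_eq_s13 m w (glap m w f) f a (hmx a),
      hsplit (fun y => (glap m w f y - glap m w f a) * (f y - f a) * w a y),
      hfa, hloop a, hwab]
    have h : ∑ x ∈ Ω, (glap m w f x - glap m w f a) * (f x - 0) * w a x
        = (∑ x ∈ Ω, glap m w f x * (f x * w a x))
          - glap m w f a * ∑ x ∈ Ω, f x * w a x := by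
      rw [Finset.mul_sum, ← Finset.sum_sub_distrib]
      exact Finset.sum_congr rfl fun x _ => by ring
    rw [h, hLsum, hL, hS1]
    ring
  have hEip : eip (wRes {a, b} w) f f = 1 / 2 * E := by
    rw [hE_def]
    simp only [eip, wRes]
    congr 1
    have h1 : ∀ x ∈ (Finset.univ : Finset V), x ∉ Ω →
        (∑ y, (f y - f x) * (f y - f x)
          * (if x ∈ ({a, b} : Finset V) ∨ y ∈ ({a, b} : Finset V) then 0 else w x y)) = 0 := by
      intro x _ hx
      have hxB : x ∈ ({a, b} : Finset V) := by
        rw [hΩ_def, Finset.mem_compl, not_not] at hx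
        exact hx
      exact Finset.sum_eq_zero fun y _ => by rw [if_pos (Or.inl hxB)]; ring
    rw [← Finset.sum_subset (Finset.subset_univ Ω) h1]
    refine Finset.sum_congr rfl fun x hx => ?_
    have h2 : ∀ y ∈ (Finset.univ : Finset V), y ∉ Ω →
        (f y - f x) * (f y - f x)
          * (if x ∈ ({a, b} : Finset V) ∨ y ∈ ({a, b} : Finset V) then 0 else w x y) = 0 := by
      intro y _ hy
      have hyB : y ∈ ({a, b} : Finset V) := by
        rw [hΩ_def, Finset.mem_compl, not_not] at hy
        exact hy
      rw [if_pos (Or.inr hyB)]; ring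
    rw [← Finset.sum_subset (Finset.subset_univ Ω) h2]
    refine Finset.sum_congr rfl fun y hy => ?_
    rw [if_neg]
    push_neg
    exact ⟨hmemΩ x hx, hmemΩ y hy⟩
  have hsymm : gGam m w f (glap m w f) a = gGam m w (glap m w f) f a :=
    gGam_symm m w f (glap m w f) a
  simp only [gGam2]
  rw [hsymm, hglapG, hGamLf, hEip]
  exact stmt13_alg (m a) Db D T Q E (f b) (hmx a)
end
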